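/- arXiv:2510.00999 — 7 statements merged into one kernel-verified Lean document; each statement's English description precedes it below -/
import Mathlib

section
/- Let U be an open set of ℝⁿ, ω a (k−1)-form defined on U, and c : B → U a singular k-block of class C¹ with domain a k-block B ⊂ ℝ^k. Suppose: (1) the pullback c^*ω is flux-continuous on B; (2) ω is derivable (in the infinitesimal-flux sense) at every point of c(B̊); (3) the pullback c^*(Dω) is Riemann integrable on B. Then ∫_{∂c} ω = ∫_c Dω. -/
open scoped BigOperators
open BoxIntegral Set

noncomputable section

/-- Riemann integrability of `f` over the closed block `[a, b] ⊆ ℝ^k`. -/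
def RiemannIntegrableOn {k : ℕ} (f : (Fin k → ℝ) → ℝ) (a b : Fin k → ℝ) : Prop :=
  ∃ h : ∀ i, a i < b i,
    BoxIntegral.Integrable ⟨a, b, h⟩ BoxIntegral.IntegrationParams.Riemann f
      BoxIntegral.BoxAdditiveMap.volume

/-- The Riemann integral of `f` over the closed block `[a, b] ⊆ ℝ^k` (junk value if
the block is degenerate or `f` is not integrable). -/
def riemannIntegral {k : ℕ} (f : (Fin k → ℝ) → ℝ) (a b : Fin k → ℝ) : ℝ :=
  if h : ∀ i, a i < b i then
    BoxIntegral.integral ⟨a, b, h⟩ BoxIntegral.IntegrationParams.Riemann f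
      BoxIntegral.BoxAdditiveMap.volume
  else 0

/-- The volume of the block `[a,b]`. -/
def blockVol {k : ℕ} (a b : Fin k → ℝ) : ℝ := ∏ i, (b i - a i)

/-- The length of the longest side of the block `[a,b]`. -/
def blockL {k : ℕ} (a b : Fin k → ℝ) : ℝ := ⨆ i, (b i - a i)

/-- The length of the shortest side of the block `[a,b]`. -/
def blockl {k : ℕ} (a b : Fin k → ℝ) : ℝ := ⨅ i, (b i - a i)

/-- `k`-forms on (subsets of) `ℝ^n`, with no regularity assumed. -/
abbrev Form (n k : ℕ) := (Fin n → ℝ) → AlternatingMap ℝ (Fin n → ℝ) ℝ (Fin k)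

/-- The `i`-th standard basis vector of `ℝ^n`. -/
def e {n : ℕ} (i : Fin n) : Fin n → ℝ := Pi.single i 1

/-- The integrand of a `k`-form `ω` on the face of a `(k+1)`-block obtained by freezing the
`i`-th coordinate at the value `c`; it is evaluated on the standard basis vectors
`(e_1, …, ê_i, …, e_{k+1})`. -/
def faceFun {k : ℕ} (ω : Form (k+1) k) (i : Fin (k+1)) (c : ℝ) : (Fin k → ℝ) → ℝ :=
  fun t => ω (i.insertNth c t) fun l => e (i.succAbove l)

/-- The flux `∫_{∂B} ω` of the `k`-form `ω` through the boundary of the `(k+1)`-block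
`[a,b]`, i.e. the alternating sum `∑_{i,j} (-1)^{i+j}` of the Riemann integrals of the
face restrictions of `ω`. -/
def boundaryIntegral {k : ℕ} (ω : Form (k+1) k) (a b : Fin (k+1) → ℝ) : ℝ :=
  ∑ i : Fin (k+1), (-1 : ℝ) ^ (i : ℕ) *
    (riemannIntegral (faceFun ω i (b i)) (a ∘ i.succAbove) (b ∘ i.succAbove)
      - riemannIntegral (faceFun ω i (a i)) (a ∘ i.succAbove) (b ∘ i.succAbove))

/-- All the face integrals making up `∫_{∂B} ω` exist as Riemann integrals. -/
def BoundaryIntegrable {k : ℕ} (ω : Form (k+1) k) (a b : Fin (k+1) → ℝ) : Prop :=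
  ∀ i : Fin (k+1), ∀ c ∈ ({a i, b i} : Set ℝ),
    RiemannIntegrableOn (faceFun ω i c) (a ∘ i.succAbove) (b ∘ i.succAbove)

/-- `ω` is flux-continuous on the `(k+1)`-block `[a,b]`: for every block
`β = [0,h₁]×…×[0,h_{k+1}]` with `0 < hᵢ < bᵢ - aᵢ`, the function `x ↦ ∫_{∂(x+β)} ω` is
continuous at every point `x` with `x + β ⊆ [a,b]`. -/
def FluxContinuousOn {k : ℕ} (ω : Form (k+1) k) (a b : Fin (k+1) → ℝ) : Prop :=
  ∀ h : Fin (k+1) → ℝ, (∀ i, 0 < h i ∧ h i < b i - a i) →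
    ∀ x ∈ {y : Fin (k+1) → ℝ | ∀ i, a i ≤ y i ∧ y i + h i ≤ b i},
      ContinuousWithinAt (fun y => boundaryIntegral ω y (fun i => y i + h i))
        {y : Fin (k+1) → ℝ | ∀ i, a i ≤ y i ∧ y i + h i ≤ b i} x

/-- The pullback of the `k`-form `ω` by the (differentiable) map `ψ`. -/
def pullback {p n k : ℕ} (ψ : (Fin p → ℝ) → (Fin n → ℝ)) (ω : Form n k) : Form p k :=
  fun t => (ω (ψ t)).compLinearMap (fderiv ℝ ψ t : (Fin p → ℝ) →L[ℝ] (Fin n → ℝ)).toLinearMap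

/-- `ω` is flux-integrable around `x ∈ U`: for every `C¹` map `φ : A → U` from an open
set `A ⊆ ℝ^{k+1}` with `φ p = x` and every `(k+1)`-block `B ⊆ A` with `p ∈ B`, the
pullback `φ*ω` is Riemann integrable over `∂B`. -/
def FluxIntegrableAround {n k : ℕ} (U : Set (Fin n → ℝ)) (ω : Form n k)
    (x : Fin n → ℝ) : Prop :=
  ∀ (A : Set (Fin (k+1) → ℝ)) (φ : (Fin (k+1) → ℝ) → (Fin n → ℝ)) (p : Fin (k+1) → ℝ),
    IsOpen A → ContDiffOn ℝ 1 φ A → Set.MapsTo φ A U → p ∈ A → φ p = x →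
    ∀ a b : Fin (k+1) → ℝ, (∀ i, a i < b i) → Set.Icc a b ⊆ A → p ∈ Set.Icc a b →
      BoundaryIntegrable (pullback φ ω) a b

/-- `ω` is derivable at `x ∈ U` in the infinitesimal-flux sense, with exterior derivative
`D ∈ Λ^{k+1}(ℝ^n)^*`. -/
def HasFluxDerivAt {n k : ℕ} (U : Set (Fin n → ℝ)) (ω : Form n k)
    (D : AlternatingMap ℝ (Fin n → ℝ) ℝ (Fin (k+1))) (x : Fin n → ℝ) : Prop :=
  FluxIntegrableAround U ω x ∧
  ∀ (v : Fin (k+1) → (Fin n → ℝ))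
    (A : Set (Fin (k+1) → ℝ)) (φ : (Fin (k+1) → ℝ) → (Fin n → ℝ)) (p : Fin (k+1) → ℝ),
    IsOpen A → ContDiffOn ℝ 1 φ A → Set.MapsTo φ A U → p ∈ A → φ p = x →
    (∀ i, fderiv ℝ φ p (e i) = v i) →
    ∀ ε > (0:ℝ), ∀ K > (1:ℝ), ∃ δ > (0:ℝ), ∀ a b : Fin (k+1) → ℝ,
      (∀ i, a i < b i) → Set.Icc a b ⊆ A → p ∈ Set.Icc a b →
      blockL a b < δ → blockL a b / blockl a b < K →
      |D v - (1 / blockVol a b) * boundaryIntegral (pullback φ ω) a b| < ε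


namespace StokesAux

open BoxIntegral Function

variable {k : ℕ}

lemma riemannIntegral_eq {f : (Fin k → ℝ) → ℝ} {a b : Fin k → ℝ} (h : ∀ i, a i < b i) :
    riemannIntegral f a b
      = BoxIntegral.integral ⟨a, b, h⟩ BoxIntegral.IntegrationParams.Riemann f
          BoxIntegral.BoxAdditiveMap.volume := dif_pos h

lemma RiemannIntegrableOn.subbox {f : (Fin k → ℝ) → ℝ} {a b A B : Fin k → ℝ}
    (hf : RiemannIntegrableOn f a b) (hAB : ∀ i, A i < B i) (hle : a ≤ A) (hle' : B ≤ b) :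
    RiemannIntegrableOn f A B := by
  obtain ⟨h, hint⟩ := hf
  exact ⟨hAB, hint.to_subbox (Box.le_iff_bounds.2 ⟨hle, hle'⟩)⟩

lemma riemannIntegral_split {f : (Fin k → ℝ) → ℝ} {A B : Fin k → ℝ}
    (hf : RiemannIntegrableOn f A B) (i : Fin k) {m : ℝ} (hm : m ∈ Set.Ioo (A i) (B i)) :
    riemannIntegral f A B
      = riemannIntegral f A (Function.update B i m)
        + riemannIntegral f (Function.update A i m) B := by
  obtain ⟨hAB, hint⟩ := hf
  set I : Box (Fin k) := ⟨A, B, hAB⟩ with hI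
  have h1 : ∀ j, A j < Function.update B i m j := by
    intro j
    rcases eq_or_ne j i with rfl | hj
    · simpa using hm.1
    · simpa [Function.update_of_ne hj] using hAB j
  have h2 : ∀ j, Function.update A i m j < B j := by
    intro j
    rcases eq_or_ne j i with rfl | hj
    · simpa using hm.2
    · simpa [Function.update_of_ne hj] using hAB j
  have hsl : I.splitLower i m = ↑(⟨A, Function.update B i m, h1⟩ : Box (Fin k)) :=
    Box.splitLower_def hm
  have hsu : I.splitUpper i m = ↑(⟨Function.update A i m, B, h2⟩ : Box (Fin k)) :=
    Box.splitUpper_def hm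
  have hadd := hint.toBoxAdditive.map_split_add le_rfl i m
  rw [hsl, hsu] at hadd
  simp only [Integrable.toBoxAdditive_apply] at hadd
  rw [riemannIntegral_eq hAB, riemannIntegral_eq h1, riemannIntegral_eq h2, ← hadd]
  rfl

lemma Box.Icc_subset_closure {I : Box (Fin k)} : Box.Icc I ⊆ closure (I : Set (Fin k → ℝ)) := by
  intro x hx
  rw [Box.Icc_def, Set.mem_Icc] at hx
  have htend : Filter.Tendsto (fun t : ℝ => fun i => x i + t * (I.upper i - x i))
      (nhdsWithin 0 (Set.Ioi 0)) (nhds x) := by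
    have : Filter.Tendsto (fun t : ℝ => fun i => x i + t * (I.upper i - x i))
        (nhds 0) (nhds (fun i => x i + 0 * (I.upper i - x i))) := by
      refine tendsto_pi_nhds.2 fun i => ?_
      exact Filter.Tendsto.add tendsto_const_nhds
        ((continuous_id.mul continuous_const).tendsto 0)
    simpa using this.mono_left nhdsWithin_le_nhds
  refine mem_closure_of_tendsto htend ?_
  have hev : ∀ᶠ t : ℝ in nhdsWithin 0 (Set.Ioi 0), t ∈ Set.Icc (0:ℝ) 1 :=
    Filter.eventually_of_mem (Icc_mem_nhdsGT_of_mem (by simp [Set.mem_Ico] : (0:ℝ) ∈ Set.Ico 0 1)) (fun _ h => h)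
  filter_upwards [self_mem_nhdsWithin, hev] with t ht ht1
  rw [Box.mem_coe, Box.mem_def]
  intro i
  rw [Set.mem_Ioc]
  have h1 : x i ≤ I.upper i := hx.2 i
  have h2 : I.lower i ≤ x i := hx.1 i
  have h3 : I.lower i < I.upper i := I.lower_lt_upper i
  have ht0 : (0:ℝ) < t := ht
  have ht1' : t ≤ 1 := ht1.2
  constructor
  · nlinarith
  · nlinarith
lemma exists_Icc_mem_of_isPartition {I : Box (Fin k)} {π : Prepartition I}
    (hπ : π.IsPartition) {x : Fin k → ℝ} (hx : x ∈ Box.Icc I) :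
    ∃ J ∈ π.boxes, x ∈ Box.Icc J := by
  have hclosed : IsClosed (⋃ J ∈ π.boxes, Box.Icc J) :=
    isClosed_biUnion_finset fun J _ => by rw [Box.Icc_def]; exact isClosed_Icc
  have hsub : (I : Set (Fin k → ℝ)) ⊆ ⋃ J ∈ π.boxes, Box.Icc J := by
    intro y hy
    obtain ⟨J, hJ, hyJ⟩ := hπ y hy
    exact Set.mem_biUnion hJ (Box.coe_subset_Icc hyJ)
  have := (Box.Icc_subset_closure hx)
  have h2 : closure (I : Set (Fin k → ℝ)) ⊆ ⋃ J ∈ π.boxes, Box.Icc J :=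
    hclosed.closure_subset_iff.2 hsub
  simpa using h2 this

lemma RiemannIntegrableOn.exists_bound {f : (Fin k → ℝ) → ℝ} {a b : Fin k → ℝ}
    (hf : RiemannIntegrableOn f a b) :
    ∃ M : ℝ, 0 ≤ M ∧ ∀ x ∈ Set.Icc a b, |f x| ≤ M := by
  obtain ⟨hab, hint⟩ := hf
  classical
  set l := BoxIntegral.IntegrationParams.Riemann with hl
  set I : Box (Fin k) := ⟨a, b, hab⟩ with hIdef
  set c₀ := I.distortion with hc₀
  set r := hint.convergenceR 1 c₀ with hr
  have hrc : ∀ x, r x = r 0 := hint.convergenceR_cond 1 c₀ rfl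
  have hρ : (0:ℝ) < (r 0 : ℝ) := (r 0).2
  set r' : (Fin k → ℝ) → Set.Ioi (0:ℝ) := fun _ => ⟨(r 0 : ℝ)/2, by exact half_pos hρ⟩ with hr'
  obtain ⟨π₀, hmem, hpart⟩ := l.exists_memBaseSet_isPartition I le_rfl r'
  have hmem' : l.MemBaseSet I c₀ r π₀ := by
    refine hmem.mono I le_rfl le_rfl fun x _ => ?_
    rw [hrc x]
    exact (half_le_self hρ.le)
  have hd₀ := hint.dist_integralSum_integral_le_of_memBaseSet zero_lt_one hmem' hpart
  -- key pointwise bound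
  have key : ∀ J ∈ π₀.boxes, ∀ ξ ∈ Box.Icc J,
      |f ξ| ≤ |f (π₀.tag J)| + 2 / ∏ i, (J.upper i - J.lower i) := by
    intro J hJ ξ hξ
    have hξI : ξ ∈ Box.Icc I := Box.le_iff_Icc.1 (π₀.le_of_mem' J hJ) hξ
    set πξ : TaggedPrepartition I :=
      ⟨π₀.toPrepartition, fun K => if K = J then ξ else π₀.tag K, by
        intro K
        by_cases hK : K = J
        · simpa [hK] using hξI
        · simpa [hK] using π₀.tag_mem_Icc K⟩ with hπξ
    have htag : ∀ K, πξ.tag K = if K = J then ξ else π₀.tag K := fun K => rfl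
    have hsubJ : Box.Icc J ⊆ Metric.closedBall (π₀.tag J) ((r 0 : ℝ)/2) := by
      simpa [hr'] using hmem.isSubordinate J hJ
    have hmemξ : l.MemBaseSet I c₀ r πξ := by
      refine ⟨?_, ?_, ?_, ?_⟩
      · intro K hK
        by_cases hKJ : K = J
        · subst hKJ
          intro y hy
          have h1 : dist y (π₀.tag K) ≤ (r 0 : ℝ)/2 := hsubJ hy
          have h2 : dist ξ (π₀.tag K) ≤ (r 0 : ℝ)/2 := hsubJ hξ
          have : dist y ξ ≤ (r 0 : ℝ) := by
            calc dist y ξ ≤ dist y (π₀.tag K) + dist ξ (π₀.tag K) := dist_triangle_right _ _ _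
            _ ≤ (r 0 : ℝ)/2 + (r 0 : ℝ)/2 := add_le_add h1 h2
            _ = (r 0 : ℝ) := add_halves _
          rw [Metric.mem_closedBall, htag K, if_pos rfl, hrc ξ]
          exact this
        · intro y hy
          have := hmem.isSubordinate K hK hy
          rw [Metric.mem_closedBall] at this ⊢
          rw [htag K, if_neg hKJ, hrc (π₀.tag K)]
          refine this.trans ?_
          simpa [hr'] using (half_le_self hρ.le)
      · intro _
        intro K hK
        by_cases hKJ : K = J
        · subst hKJ; rw [htag K, if_pos rfl]; exact hξ
        · have := hmem.isHenstock rfl K hK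
          rw [htag K, if_neg hKJ]; exact this
      · intro h; exact absurd h (by decide)
      · intro h; exact absurd h (by decide)
    have hdξ := hint.dist_integralSum_integral_le_of_memBaseSet zero_lt_one hmemξ hpart
    have hsum : BoxIntegral.integralSum f BoxIntegral.BoxAdditiveMap.volume πξ
        - BoxIntegral.integralSum f BoxIntegral.BoxAdditiveMap.volume π₀
        = (∏ i, (J.upper i - J.lower i)) * f ξ - (∏ i, (J.upper i - J.lower i)) * f (π₀.tag J) := by
      rw [BoxIntegral.integralSum, BoxIntegral.integralSum, ← Finset.sum_sub_distrib]
      rw [Finset.sum_eq_single_of_mem J hJ]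
      · rw [htag J, if_pos rfl]
        simp [BoxIntegral.BoxAdditiveMap.volume_apply, smul_eq_mul]
      · intro K hK hKJ
        rw [htag K, if_neg hKJ, sub_self]
    have hd2 : |BoxIntegral.integralSum f BoxIntegral.BoxAdditiveMap.volume πξ
        - BoxIntegral.integralSum f BoxIntegral.BoxAdditiveMap.volume π₀| ≤ 2 := by
      have := dist_triangle_right (BoxIntegral.integralSum f BoxIntegral.BoxAdditiveMap.volume πξ)
        (BoxIntegral.integralSum f BoxIntegral.BoxAdditiveMap.volume π₀)
        (BoxIntegral.integral I l f BoxIntegral.BoxAdditiveMap.volume)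
      rw [← Real.dist_eq]
      calc dist _ _ ≤ _ := this
      _ ≤ 1 + 1 := add_le_add hdξ hd₀
      _ = 2 := by norm_num
    rw [hsum] at hd2
    have hvol : (0:ℝ) < ∏ i, (J.upper i - J.lower i) :=
      Finset.prod_pos fun i _ => sub_pos.2 (J.lower_lt_upper i)
    rw [← mul_sub, abs_mul, abs_of_pos hvol] at hd2
    have h3 : |f ξ - f (π₀.tag J)| ≤ 2 / ∏ i, (J.upper i - J.lower i) :=
      (le_div_iff₀' hvol).2 hd2
    calc |f ξ| = |f (π₀.tag J) + (f ξ - f (π₀.tag J))| := by ring_nf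
    _ ≤ |f (π₀.tag J)| + |f ξ - f (π₀.tag J)| := abs_add_le _ _
    _ ≤ |f (π₀.tag J)| + 2 / ∏ i, (J.upper i - J.lower i) := by linarith
  -- assemble the bound
  have hne : π₀.boxes.Nonempty := by
    rcases exists_Icc_mem_of_isPartition hpart (I.lower_mem_Icc) with ⟨J, hJ, -⟩
    exact ⟨J, hJ⟩
  refine ⟨π₀.boxes.sup' hne fun J => |f (π₀.tag J)| + 2 / ∏ i, (J.upper i - J.lower i), ?_, ?_⟩
  · rcases hne with ⟨J, hJ⟩
    refine le_trans ?_ (Finset.le_sup' (fun J => |f (π₀.tag J)| + 2 / ∏ i, (J.upper i - J.lower i)) hJ)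
    have hvol : (0:ℝ) < ∏ i, (J.upper i - J.lower i) :=
      Finset.prod_pos fun i _ => sub_pos.2 (J.lower_lt_upper i)
    positivity
  · intro x hx
    have hxI : x ∈ Box.Icc I := by simpa [Box.Icc_def] using hx
    obtain ⟨J, hJ, hxJ⟩ := exists_Icc_mem_of_isPartition hpart hxI
    exact (key J hJ x hxJ).trans (Finset.le_sup' (fun J => |f (π₀.tag J)| + 2 / ∏ i, (J.upper i - J.lower i)) hJ)
lemma abs_integral_le {I₀ : Box (Fin k)} {f : (Fin k → ℝ) → ℝ} {M : ℝ}
    (hM : ∀ x ∈ Box.Icc I₀, |f x| ≤ M) {J : Box (Fin k)} (hJ : J ≤ I₀) :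
    |BoxIntegral.integral J BoxIntegral.IntegrationParams.Riemann f
        BoxIntegral.BoxAdditiveMap.volume| ≤ M * ∏ i, (J.upper i - J.lower i) := by
  have hvol : (BoxIntegral.BoxAdditiveMap.volume : Fin k →ᵇᵃ ℝ →L[ℝ] ℝ)
      = (MeasureTheory.volume : MeasureTheory.Measure (Fin k → ℝ)).toBoxAdditive.toSMul := rfl
  have hb : ∀ x ∈ Box.Icc J, ‖f x‖ ≤ M := fun x hx => by
    rw [Real.norm_eq_abs]; exact hM x (Box.le_iff_Icc.1 hJ hx)
  have := BoxIntegral.norm_integral_le_of_le_const (l := BoxIntegral.IntegrationParams.Riemann)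
    (I := J) (f := f) (E := ℝ) hb (MeasureTheory.volume : MeasureTheory.Measure (Fin k → ℝ))
  rw [← hvol, MeasureTheory.measureReal_def, Box.volume_apply'] at this
  simpa [Real.norm_eq_abs, mul_comm] using this

lemma integral_sub_integral_le {I₀ : Box (Fin k)} {f : (Fin k → ℝ) → ℝ}
    (hint : BoxIntegral.Integrable I₀ BoxIntegral.IntegrationParams.Riemann f
      BoxIntegral.BoxAdditiveMap.volume) {M : ℝ}
    (hM : ∀ x ∈ Box.Icc I₀, |f x| ≤ M)
    {W W' : Box (Fin k)} (h' : W' ≤ W) (hW : W ≤ I₀) :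
    |BoxIntegral.integral W BoxIntegral.IntegrationParams.Riemann f
        BoxIntegral.BoxAdditiveMap.volume
      - BoxIntegral.integral W' BoxIntegral.IntegrationParams.Riemann f
        BoxIntegral.BoxAdditiveMap.volume|
      ≤ M * ((∏ i, (W.upper i - W.lower i)) - ∏ i, (W'.upper i - W'.lower i)) := by
  classical
  set π : Prepartition W := Prepartition.single W W' h' with hπ
  set π' := π.compl with hπ'
  have hπU : π.iUnion = ↑W' := Prepartition.iUnion_single h'
  have hπ'U : π'.iUnion = ↑W \ ↑W' := by rw [hπ', Prepartition.iUnion_compl, hπU]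
  have hdisj : Disjoint π.iUnion π'.iUnion := by
    rw [hπU, hπ'U]; exact disjoint_sdiff_self_right
  set πW := π.disjUnion π' hdisj with hπW
  have hpart : πW.IsPartition := by
    rw [Prepartition.isPartition_iff_iUnion_eq, hπW, Prepartition.iUnion_disjUnion, hπU, hπ'U]
    exact Set.union_diff_cancel (Box.coe_subset_coe.2 h')
  have hfdisj : Disjoint π.boxes π'.boxes := by
    rw [Finset.disjoint_left]
    intro J hJ hJ'
    have h1 : (J : Set (Fin k → ℝ)) ⊆ π.iUnion := π.subset_iUnion hJ
    have h2 : (J : Set (Fin k → ℝ)) ⊆ π'.iUnion := π'.subset_iUnion hJ'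
    have := hdisj.mono h1 h2
    exact J.nonempty_coe.ne_empty (disjoint_self.1 this)
  have hπboxes : π.boxes = {W'} := rfl
  -- additivity for the integral
  have hg := hint.toBoxAdditive.sum_partition_boxes
    (I := W) (WithTop.coe_le_coe.2 hW) hpart
  have hμ := (MeasureTheory.volume : MeasureTheory.Measure (Fin k → ℝ)).toBoxAdditive
    |>.sum_partition_boxes (I := W) le_top hpart
  rw [hπW, Prepartition.disjUnion_boxes, Finset.sum_union hfdisj, hπboxes,
    Finset.sum_singleton] at hg hμ
  simp only [BoxIntegral.Integrable.toBoxAdditive_apply] at hg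
  simp only [MeasureTheory.Measure.toBoxAdditive_apply] at hμ
  have hWeq : ∀ J : Box (Fin k), (MeasureTheory.volume (J : Set (Fin k → ℝ))).toReal
      = ∏ i, (J.upper i - J.lower i) := fun J => Box.volume_apply' J
  have key : BoxIntegral.integral W BoxIntegral.IntegrationParams.Riemann f
        BoxIntegral.BoxAdditiveMap.volume
      - BoxIntegral.integral W' BoxIntegral.IntegrationParams.Riemann f
        BoxIntegral.BoxAdditiveMap.volume
      = ∑ J ∈ π'.boxes, BoxIntegral.integral J BoxIntegral.IntegrationParams.Riemann f
          BoxIntegral.BoxAdditiveMap.volume := by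
    rw [← hg]; ring
  rw [key]
  have hvolsum : ∑ J ∈ π'.boxes, ∏ i, (J.upper i - J.lower i)
      = (∏ i, (W.upper i - W.lower i)) - ∏ i, (W'.upper i - W'.lower i) := by
    have := hμ
    simp only [MeasureTheory.measureReal_def] at this; rw [hWeq W, hWeq W'] at this
    have h2 : ∑ J ∈ π'.boxes, (MeasureTheory.volume (J : Set (Fin k → ℝ))).toReal
        = ∑ J ∈ π'.boxes, ∏ i, (J.upper i - J.lower i) :=
      Finset.sum_congr rfl fun J _ => hWeq J
    rw [h2] at this
    linarith
  calc |∑ J ∈ π'.boxes, BoxIntegral.integral J BoxIntegral.IntegrationParams.Riemann f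
          BoxIntegral.BoxAdditiveMap.volume|
      ≤ ∑ J ∈ π'.boxes, |BoxIntegral.integral J BoxIntegral.IntegrationParams.Riemann f
          BoxIntegral.BoxAdditiveMap.volume| := Finset.abs_sum_le_sum_abs _ _
    _ ≤ ∑ J ∈ π'.boxes, M * ∏ i, (J.upper i - J.lower i) := by
        refine Finset.sum_le_sum fun J hJ => ?_
        exact abs_integral_le hM ((π'.le_of_mem' J hJ).trans hW)
    _ = M * ((∏ i, (W.upper i - W.lower i)) - ∏ i, (W'.upper i - W'.lower i)) := by
        rw [← Finset.mul_sum, hvolsum]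
lemma blockL_le_two_mul {J : Box (Fin (k+1))} {x : Fin (k+1) → ℝ} {d : ℝ}
    (h : Box.Icc J ⊆ Metric.closedBall x d) :
    blockL J.lower J.upper ≤ 2 * d := by
  refine ciSup_le fun i => ?_
  have h1 : dist J.lower x ≤ d := h J.lower_mem_Icc
  have h2 : dist J.upper x ≤ d := h J.upper_mem_Icc
  have h3 : dist (J.lower i) (x i) ≤ dist J.lower x := dist_le_pi_dist _ _ _
  have h4 : dist (J.upper i) (x i) ≤ dist J.upper x := dist_le_pi_dist _ _ _
  rw [Real.dist_eq] at h3 h4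
  have := abs_sub_abs_le_abs_sub (J.upper i - x i) (J.lower i - x i)
  calc J.upper i - J.lower i = (J.upper i - x i) - (J.lower i - x i) := by ring
  _ ≤ |(J.upper i - x i) - (J.lower i - x i)| := le_abs_self _
  _ ≤ |J.upper i - x i| + |J.lower i - x i| := abs_sub _ _
  _ ≤ d + d := add_le_add (h4.trans h2) (h3.trans h1)
  _ = 2 * d := by ring

lemma blockl_pos {J : Box (Fin (k+1))} : 0 < blockl J.lower J.upper := by
  obtain ⟨i₀, hi₀⟩ := Finite.exists_min (fun i => J.upper i - J.lower i)
  have : blockl J.lower J.upper = J.upper i₀ - J.lower i₀ := by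
    refine le_antisymm (ciInf_le (Set.Finite.bddBelow (Set.finite_range _)) i₀) (le_ciInf hi₀)
  rw [this]
  exact sub_pos.2 (J.lower_lt_upper i₀)

lemma blockL_div_blockl_lt {J : Box (Fin (k+1))} {c : NNReal} (h : J.distortion ≤ c) :
    blockL J.lower J.upper / blockl J.lower J.upper < (c : ℝ) + 2 := by
  obtain ⟨i₀, hi₀⟩ := Finite.exists_min (fun i => J.upper i - J.lower i)
  have hbl : blockl J.lower J.upper = J.upper i₀ - J.lower i₀ :=
    le_antisymm (ciInf_le (Set.Finite.bddBelow (Set.finite_range _)) i₀) (le_ciInf hi₀)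
  have hd : dist J.lower J.upper ≤ (J.distortion : ℝ) * (J.upper i₀ - J.lower i₀) :=
    J.dist_le_distortion_mul i₀
  have hL : blockL J.lower J.upper ≤ dist J.lower J.upper := by
    refine ciSup_le fun i => ?_
    have h3 : dist (J.lower i) (J.upper i) ≤ dist J.lower J.upper := dist_le_pi_dist _ _ _
    rw [Real.dist_eq] at h3
    calc J.upper i - J.lower i ≤ |J.lower i - J.upper i| := by
          rw [abs_sub_comm]; exact le_abs_self _
    _ ≤ dist J.lower J.upper := h3
  have hc : (J.distortion : ℝ) ≤ (c : ℝ) := NNReal.coe_le_coe.2 h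
  have hpos : 0 < blockl J.lower J.upper := blockl_pos
  rw [div_lt_iff₀ hpos, hbl]
  have h0 : 0 ≤ J.upper i₀ - J.lower i₀ := (sub_pos.2 (J.lower_lt_upper i₀)).le
  nlinarith [hL.trans (hd.trans (mul_le_mul_of_nonneg_right hc h0))]

lemma blockVol_eq {J : Box (Fin (k+1))} :
    blockVol J.lower J.upper = ∏ i, (J.upper i - J.lower i) := rfl

lemma blockVol_pos {J : Box (Fin (k+1))} : 0 < blockVol J.lower J.upper :=
  Finset.prod_pos fun i _ => sub_pos.2 (J.lower_lt_upper i)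
lemma boundaryIntegral_split {ω : Form (k+1) k} {l u : Fin (k+1) → ℝ}
    (hB : BoundaryIntegrable ω l u) (i : Fin (k+1)) {m : ℝ} (hm : m ∈ Set.Ioo (l i) (u i)) :
    boundaryIntegral ω l u
      = boundaryIntegral ω l (Function.update u i m)
        + boundaryIntegral ω (Function.update l i m) u := by
  classical
  unfold boundaryIntegral
  rw [← Finset.sum_add_distrib]
  refine Finset.sum_congr rfl fun j _ => ?_
  rcases eq_or_ne j i with rfl | hij
  · -- split direction: compositions unchanged, values telescope
    have e1 : (Function.update u j m) ∘ j.succAbove = u ∘ j.succAbove :=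
      funext fun r => Function.update_of_ne (Fin.succAbove_ne j r) _ _
    have e2 : (Function.update l j m) ∘ j.succAbove = l ∘ j.succAbove :=
      funext fun r => Function.update_of_ne (Fin.succAbove_ne j r) _ _
    rw [e1, e2, Function.update_self, Function.update_self]
    ring
  · -- transverse direction: the face integrals split
    obtain ⟨r₀, hr₀⟩ := Fin.exists_succAbove_eq hij.symm
    have hinj : Function.Injective j.succAbove := Fin.succAbove_right_injective
    have hcompu : (Function.update u i m) ∘ j.succAbove
        = Function.update (u ∘ j.succAbove) r₀ m := by
      funext r
      rcases eq_or_ne r r₀ with rfl | hr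
      · rw [Function.comp_apply, hr₀, Function.update_self, Function.update_self]
      · have : j.succAbove r ≠ i := fun h => hr (hinj (h.trans hr₀.symm))
        simp [Function.comp, Function.update_of_ne this, Function.update_of_ne hr]
    have hcompl : (Function.update l i m) ∘ j.succAbove
        = Function.update (l ∘ j.succAbove) r₀ m := by
      funext r
      rcases eq_or_ne r r₀ with rfl | hr
      · rw [Function.comp_apply, hr₀, Function.update_self, Function.update_self]
      · have : j.succAbove r ≠ i := fun h => hr (hinj (h.trans hr₀.symm))
        simp [Function.comp, Function.update_of_ne this, Function.update_of_ne hr]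
    have hvu : (Function.update u i m) j = u j := Function.update_of_ne hij _ _
    have hvl : (Function.update l i m) j = l j := Function.update_of_ne hij _ _
    have hm' : m ∈ Set.Ioo ((l ∘ j.succAbove) r₀) ((u ∘ j.succAbove) r₀) := by
      simpa [Function.comp, hr₀] using hm
    have hintu : RiemannIntegrableOn (faceFun ω j (u j)) (l ∘ j.succAbove) (u ∘ j.succAbove) :=
      hB j (u j) (by simp)
    have hintl : RiemannIntegrableOn (faceFun ω j (l j)) (l ∘ j.succAbove) (u ∘ j.succAbove) :=
      hB j (l j) (by simp)
    rw [hcompu, hcompl, hvu, hvl,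
      riemannIntegral_split hintu r₀ hm', riemannIntegral_split hintl r₀ hm']
    ring

end StokesAux

/-- **Stokes' theorem for the flux exterior derivative.** Let `U ⊆ ℝ^n` be open, `ω` a
`k`-form on `U` and `c : [a,b] → U` a singular `(k+1)`-block of class `C¹` (i.e. `c` is
`C¹` on an open set `A ⊇ [a,b]`).  If `c*ω` is flux-continuous on `[a,b]`, `ω` is derivable
(with exterior derivative `Dω`) at every point of the image under `c` of the interior of
`[a,b]`, and `c*(Dω)` is Riemann integrable on `[a,b]`, then `∫_{∂c} ω = ∫_c Dω`. -/
theorem stokes_for_flux_deriv {n k : ℕ} (U : Set (Fin n → ℝ)) (hU : IsOpen U)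
    (ω : Form n k) (Dω : Form n (k+1))
    (a b : Fin (k+1) → ℝ) (hab : ∀ i, a i < b i)
    (A : Set (Fin (k+1) → ℝ)) (hA : IsOpen A) (hBA : Set.Icc a b ⊆ A)
    (c : (Fin (k+1) → ℝ) → (Fin n → ℝ)) (hc : ContDiffOn ℝ 1 c A)
    (hmap : Set.MapsTo c (Set.Icc a b) U)
    (h1 : FluxContinuousOn (pullback c ω) a b)
    (h2 : ∀ t : Fin (k+1) → ℝ, (∀ i, a i < t i ∧ t i < b i) →
      HasFluxDerivAt U ω (Dω (c t)) (c t))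
    (h3 : RiemannIntegrableOn (fun t => pullback c Dω t fun i => e i) a b) :
    boundaryIntegral (pullback c ω) a b
      = riemannIntegral (fun t => pullback c Dω t fun i => e i) a b := by
  classical
  open StokesAux BoxIntegral in
  set f : (Fin (k+1) → ℝ) → ℝ := fun t => pullback c Dω t (fun i => e i) with hfdef
  obtain ⟨hab', hint⟩ := h3
  set I₀ : Box (Fin (k+1)) := ⟨a, b, hab'⟩ with hI₀
  set A' := A ∩ c ⁻¹' U with hA'def
  have hA' : IsOpen A' := hc.continuousOn.isOpen_inter_preimage hA hU
  have hc' : ContDiffOn ℝ 1 c A' := hc.mono Set.inter_subset_left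
  have hmap' : Set.MapsTo c A' U := fun x hx => hx.2
  have hIccA' : Set.Icc a b ⊆ A' := fun x hx => ⟨hBA hx, hmap hx⟩
  -- boundary integrability on all subboxes
  have hBI : ∀ J : Box (Fin (k+1)), Box.Icc J ⊆ Set.Icc a b →
      BoundaryIntegrable (pullback c ω) J.lower J.upper := by
    intro J hJ
    set p : Fin (k+1) → ℝ := fun i => (J.lower i + J.upper i)/2 with hp
    have hpJ : p ∈ Set.Icc J.lower J.upper := by
      constructor <;> intro i <;>
        simp only [hp] <;> nlinarith [J.lower_lt_upper i]
    have hlmem : J.lower ∈ Set.Icc a b := hJ J.lower_mem_Icc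
    have humem : J.upper ∈ Set.Icc a b := hJ J.upper_mem_Icc
    have hpint : ∀ i, a i < p i ∧ p i < b i := by
      intro i
      have h1' := hlmem.1 i; have h2' := humem.2 i
      have := J.lower_lt_upper i
      constructor <;> simp only [hp] <;> nlinarith
    have hIccJ : Set.Icc J.lower J.upper ⊆ A' := by
      intro y hy
      refine hIccA' ?_
      have : y ∈ Box.Icc J := by rwa [Box.Icc_def]
      exact hJ this
    exact (h2 p hpint).1 A' c p hA' hc' hmap' (hIccJ hpJ) rfl J.lower J.upper
      J.lower_lt_upper hIccJ hpJ
  -- the flux, as a box-additive map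
  set F : Box (Fin (k+1)) → ℝ := fun J => boundaryIntegral (pullback c ω) J.lower J.upper
    with hFdef
  have hIccsub : ∀ J : Box (Fin (k+1)), J ≤ I₀ → Box.Icc J ⊆ Set.Icc a b := by
    intro J hJ
    have := Box.le_iff_Icc.1 hJ
    rwa [Box.Icc_def (I := I₀)] at this
  have hsplit : ∀ J : Box (Fin (k+1)), ↑J ≤ (↑I₀ : WithTop (Box (Fin (k+1)))) →
      ∀ {i : Fin (k+1)} {x : ℝ}, x ∈ Set.Ioo (J.lower i) (J.upper i) →
      (J.splitLower i x).elim' 0 F + (J.splitUpper i x).elim' 0 F = F J := by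
    intro J hJ i x hx
    have hJle : J ≤ I₀ := WithTop.coe_le_coe.1 hJ
    have h1' : ∀ j, J.lower j < Function.update J.upper i x j := by
      intro j
      rcases eq_or_ne j i with rfl | hj
      · simpa using hx.1
      · simpa [Function.update_of_ne hj] using J.lower_lt_upper j
    have h2' : ∀ j, Function.update J.lower i x j < J.upper j := by
      intro j
      rcases eq_or_ne j i with rfl | hj
      · simpa using hx.2
      · simpa [Function.update_of_ne hj] using J.lower_lt_upper j
    rw [Box.splitLower_def hx, Box.splitUpper_def hx]
    have := StokesAux.boundaryIntegral_split (hBI J (hIccsub J hJle)) i hx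
    simp only [Option.elim']
    rw [hFdef]
    dsimp only
    linarith [this]
  set Φ : BoxIntegral.BoxAdditiveMap (Fin (k+1)) ℝ ↑I₀ :=
    BoxIntegral.BoxAdditiveMap.ofMapSplitAdd F ↑I₀ hsplit with hΦdef
  have hΦ : ∀ J : Box (Fin (k+1)), Φ J = F J := fun J => rfl
  -- bound for f
  obtain ⟨M, hM0, hM⟩ := StokesAux.RiemannIntegrableOn.exists_bound ⟨hab', hint⟩
  have hMIcc : ∀ x ∈ Box.Icc I₀, |f x| ≤ M := by
    intro x hx
    exact hM x (by rwa [Box.Icc_def] at hx)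
  -- Step A : for boxes compactly inside, the flux has the right integral
  have stepA : ∀ β : Box (Fin (k+1)), (∀ i, a i < β.lower i ∧ β.upper i < b i) →
      F β = BoxIntegral.integral β BoxIntegral.IntegrationParams.Riemann f
        BoxIntegral.BoxAdditiveMap.volume := by
    intro β hβ
    have hβI : β ≤ I₀ := Box.le_iff_bounds.2
      ⟨fun i => (hβ i).1.le, fun i => (hβ i).2.le⟩
    have hβIcc : ∀ x ∈ Box.Icc β, ∀ i, a i < x i ∧ x i < b i := by
      intro x hx i
      exact ⟨(hβ i).1.trans_le (hx.1 i), (hx.2 i).trans_lt (hβ i).2⟩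
    have hHas : BoxIntegral.HasIntegral β ⊥ f BoxIntegral.BoxAdditiveMap.volume
        ((Φ.restrict ↑β (WithTop.coe_le_coe.2 hβI)) β) := by
      refine BoxIntegral.HasIntegral.of_le_Henstock_of_forall_isLittleO bot_le
        (((MeasureTheory.volume : MeasureTheory.Measure (Fin (k+1) → ℝ)).toBoxAdditive).restrict
          ↑β le_top)
        (fun J => ENNReal.toReal_nonneg)
        (Φ.restrict ↑β (WithTop.coe_le_coe.2 hβI)) ∅ Set.countable_empty
        (fun c' x hx => (hx.2.elim)) ?_
      intro c' x hx ε hε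
      have hxInt := hβIcc x hx.1
      have hxA' : x ∈ A' := hIccA' ⟨fun i => (hxInt i).1.le, fun i => (hxInt i).2.le⟩
      obtain ⟨δ, hδ0, hδ⟩ := (h2 x hxInt).2 (fun i => fderiv ℝ c x (e i)) A' c x hA' hc'
        hmap' hxA' rfl (fun i => rfl) ε hε ((c' : ℝ) + 2)
        (by have := c'.coe_nonneg; linarith)
      refine ⟨δ/3, by positivity, ?_⟩
      intro J hJβ hJball hxJ hdist
      have hJI₀ : J ≤ I₀ := hJβ.trans hβI
      have hIccJA' : Set.Icc J.lower J.upper ⊆ A' := by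
        intro y hy
        exact hIccA' ((hIccsub J hJI₀) (by rwa [Box.Icc_def]))
      have hxJ' : x ∈ Set.Icc J.lower J.upper := by rwa [Box.Icc_def] at hxJ
      have hLsmall : blockL J.lower J.upper < δ := by
        have := StokesAux.blockL_le_two_mul hJball
        linarith
      have hratio : blockL J.lower J.upper / blockl J.lower J.upper < (c' : ℝ) + 2 :=
        StokesAux.blockL_div_blockl_lt (hdist rfl)
      have hest := hδ J.lower J.upper J.lower_lt_upper hIccJA' hxJ' hLsmall hratio
      have hfx : Dω (c x) (fun i => fderiv ℝ c x (e i)) = f x := by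
        simp [hfdef, pullback]
      rw [hfx] at hest
      have hV : (0:ℝ) < blockVol J.lower J.upper := StokesAux.blockVol_pos
      have hgoal : dist (BoxIntegral.BoxAdditiveMap.volume J (f x)) (F J)
          ≤ ε * (MeasureTheory.volume (J : Set (Fin (k+1) → ℝ))).toReal := by
        rw [BoxIntegral.BoxAdditiveMap.volume_apply, Box.volume_apply', Real.dist_eq,
          smul_eq_mul]
        have hVeq : blockVol J.lower J.upper = ∏ i, (J.upper i - J.lower i) :=
          StokesAux.blockVol_eq
        rw [← hVeq]
        have hfact : blockVol J.lower J.upper * f x - F J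
            = blockVol J.lower J.upper
              * (f x - 1 / blockVol J.lower J.upper * F J) := by
          field_simp
        rw [hfact, abs_mul, abs_of_pos hV]
        calc blockVol J.lower J.upper * |f x - 1 / blockVol J.lower J.upper * F J|
            ≤ blockVol J.lower J.upper * ε := by
              exact mul_le_mul_of_nonneg_left hest.le hV.le
          _ = ε * blockVol J.lower J.upper := by ring
      exact hgoal
    have hHas2 : BoxIntegral.HasIntegral β ⊥ f BoxIntegral.BoxAdditiveMap.volume
        (BoxIntegral.integral β BoxIntegral.IntegrationParams.Riemann f
          BoxIntegral.BoxAdditiveMap.volume) :=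
      (hint.to_subbox hβI).hasIntegral.mono bot_le
    exact hHas.unique hHas2
  -- Step B : extend to the boxes of the center split by flux continuity
  have stepB : ∀ J ∈ BoxIntegral.Prepartition.splitCenter I₀,
      F J = BoxIntegral.integral J BoxIntegral.IntegrationParams.Riemann f
        BoxIntegral.BoxAdditiveMap.volume := by
    intro J hJmem
    have hJle : J ≤ I₀ := BoxIntegral.Prepartition.le_of_mem _ hJmem
    have hside : ∀ i, J.upper i - J.lower i = (b i - a i)/2 := fun i =>
      BoxIntegral.Prepartition.upper_sub_lower_of_mem_splitCenter hJmem i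
    set h : Fin (k+1) → ℝ := fun i => J.upper i - J.lower i with hhdef
    have hh : ∀ i, 0 < h i ∧ h i < b i - a i := by
      intro i
      rw [hhdef]; dsimp only
      rw [hside i]
      constructor <;> nlinarith [hab i]
    set x : Fin (k+1) → ℝ := J.lower with hxdef
    have hbounds := Box.le_iff_bounds.1 hJle
    have hxX : ∀ i, a i ≤ x i ∧ x i + h i ≤ b i := by
      intro i
      refine ⟨hbounds.1 i, ?_⟩
      rw [hhdef]; dsimp only; rw [hxdef]
      have := hbounds.2 i
      dsimp only at this ⊢
      linarith [this]
    have hCWA := h1 h hh x (by exact hxX)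
    -- approach path
    set z : Fin (k+1) → ℝ := fun i => a i + (b i - a i)/4 with hzdef
    set y : ℝ → (Fin (k+1) → ℝ) := fun t i => x i + t * (z i - x i) with hydef
    have hyx : ∀ t ∈ Set.Ioc (0:ℝ) 1, ∀ i, a i < y t i ∧ y t i + h i < b i := by
      intro t ht i
      have h1' : a i ≤ x i := (hxX i).1
      have h2' : x i + h i ≤ b i := (hxX i).2
      have h3' : z i - a i = (b i - a i)/4 := by simp only [hzdef]; ring
      have h4' : 0 < b i - a i := sub_pos.2 (hab i)
      have hhi : h i = (b i - a i)/2 := by rw [hhdef]; exact hside i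
      constructor
      · have hexp : y t i - a i = (1 - t)*(x i - a i) + t*(z i - a i) := by
          simp only [hydef]; ring
        nlinarith [mul_nonneg (sub_nonneg.2 ht.2) (sub_nonneg.2 h1'),
          mul_pos ht.1 (by rw [h3']; linarith : (0:ℝ) < z i - a i)]
      · have hexp : b i - (y t i + h i) = (1 - t)*(b i - x i - h i) + t*(b i - z i - h i) := by
          simp only [hydef]; ring
        have h5' : b i - z i - h i = (b i - a i)/4 := by
          simp only [hzdef]; rw [hhi]; ring
        nlinarith [mul_nonneg (sub_nonneg.2 ht.2) (by linarith : (0:ℝ) ≤ b i - x i - h i),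
          mul_pos ht.1 (by rw [h5']; linarith : (0:ℝ) < b i - z i - h i)]
    -- tendsto of the path
    have hycont : Filter.Tendsto y (nhdsWithin 0 (Set.Ioi 0)) (nhds x) := by
      have : Filter.Tendsto y (nhds 0) (nhds (fun i => x i + 0 * (z i - x i))) := by
        refine tendsto_pi_nhds.2 fun i => ?_
        exact Filter.Tendsto.add tendsto_const_nhds
          ((continuous_id.mul continuous_const).tendsto 0)
      have hx0 : (fun i => x i + 0 * (z i - x i)) = x := by funext i; ring
      rw [hx0] at this
      exact this.mono_left nhdsWithin_le_nhds
    have hevIoc : ∀ᶠ t : ℝ in nhdsWithin 0 (Set.Ioi 0), t ∈ Set.Ioc (0:ℝ) 1 := by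
      have : Set.Ioc (0:ℝ) 1 ∈ nhdsWithin 0 (Set.Ioi 0) :=
        Ioc_mem_nhdsGT_of_mem (by constructor <;> norm_num)
      exact Filter.eventually_of_mem this fun _ h => h
    have hty : Filter.Tendsto y (nhdsWithin 0 (Set.Ioi 0))
        (nhdsWithin x {w : Fin (k+1) → ℝ | ∀ i, a i ≤ w i ∧ w i + h i ≤ b i}) := by
      refine tendsto_nhdsWithin_of_tendsto_nhds_of_eventually_within _ hycont ?_
      filter_upwards [hevIoc] with t ht
      intro i
      exact ⟨(hyx t ht i).1.le, (hyx t ht i).2.le⟩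
    have hG := hCWA.tendsto.comp hty
    -- the moving boxes
    have hhpos : ∀ i, (0:ℝ) < h i := fun i => (hh i).1
    set Jb : ℝ → Box (Fin (k+1)) := fun t =>
      ⟨y t, fun i => y t i + h i, fun i => by linarith [hhpos i]⟩ with hJbdef
    have hGy : ∀ t ∈ Set.Ioc (0:ℝ) 1,
        boundaryIntegral (pullback c ω) (y t) (fun i => y t i + h i)
          = BoxIntegral.integral (Jb t) BoxIntegral.IntegrationParams.Riemann f
              BoxIntegral.BoxAdditiveMap.volume := by
      intro t ht
      have := stepA (Jb t) ?_
      · exact this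
      · intro i
        exact ⟨(hyx t ht i).1, (hyx t ht i).2⟩
    -- convergence of the integrals
    have htendν : Filter.Tendsto
        (fun t => BoxIntegral.integral (Jb t) BoxIntegral.IntegrationParams.Riemann f
          BoxIntegral.BoxAdditiveMap.volume)
        (nhdsWithin 0 (Set.Ioi 0))
        (nhds (BoxIntegral.integral J BoxIntegral.IntegrationParams.Riemann f
          BoxIntegral.BoxAdditiveMap.volume)) := by
      set w : Fin (k+1) → ℝ := fun i => |z i - x i| with hwdef
      have hw : ∀ i, (0:ℝ) ≤ w i := fun i => abs_nonneg _
      have hne : (Finset.univ : Finset (Fin (k+1))).Nonempty := Finset.univ_nonempty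
      set t₀ : ℝ := Finset.univ.inf' hne (fun i => h i / (w i + 1)) with ht₀def
      have ht₀pos : 0 < t₀ := by
        rw [ht₀def, Finset.lt_inf'_iff]
        intro i _
        have h6 : (0:ℝ) < w i + 1 := by linarith [hw i]
        exact div_pos (hhpos i) h6
      have hbnd : ∀ᶠ t in nhdsWithin (0:ℝ) (Set.Ioi 0),
          |BoxIntegral.integral (Jb t) BoxIntegral.IntegrationParams.Riemann f
              BoxIntegral.BoxAdditiveMap.volume
            - BoxIntegral.integral J BoxIntegral.IntegrationParams.Riemann f
              BoxIntegral.BoxAdditiveMap.volume|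
            ≤ 2*M*((∏ i, h i) - ∏ i, (h i - t * w i)) := by
        have hlt : ∀ᶠ t in nhdsWithin (0:ℝ) (Set.Ioi 0), t < t₀ :=
          (Filter.Tendsto.eventually_lt_const ht₀pos Filter.tendsto_id).filter_mono
            (nhdsWithin_le_nhds)
        filter_upwards [hevIoc, hlt, self_mem_nhdsWithin] with t ht1 htlt ht0
        replace ht0 : (0:ℝ) < t := ht0
        have htw : ∀ i, t * w i < h i := by
          intro i
          have h5 : t₀ ≤ h i / (w i + 1) := Finset.inf'_le _ (Finset.mem_univ i)
          have h6 : (0:ℝ) < w i + 1 := by linarith [hw i]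
          have h7 : t₀ * (w i + 1) ≤ h i := (le_div_iff₀ h6).1 h5
          nlinarith [hw i]
        have habs : ∀ i, |x i - y t i| = t * w i := by
          intro i
          rw [abs_sub_comm]
          have hyx' : y t i - x i = t * (z i - x i) := by simp only [hydef]; ring
          rw [hyx', abs_mul, abs_of_pos ht0]
        have hKpos : ∀ i, max (x i) (y t i) < min (x i) (y t i) + h i := by
          intro i
          have h8 : max (x i) (y t i) - min (x i) (y t i) = |x i - y t i| :=
            max_sub_min_eq_abs' _ _
          have h9 := habs i
          have := htw i
          linarith
        set K : Box (Fin (k+1)) := ⟨fun i => max (x i) (y t i),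
          fun i => min (x i) (y t i) + h i, hKpos⟩ with hKdef
        have hKside : ∀ i, K.upper i - K.lower i = h i - t * w i := by
          intro i
          have h8 : max (x i) (y t i) - min (x i) (y t i) = |x i - y t i| :=
            max_sub_min_eq_abs' _ _
          have h9 := habs i
          show min (x i) (y t i) + h i - max (x i) (y t i) = h i - t * w i
          linarith
        have hxh : ∀ i, x i + h i = J.upper i := by
          intro i
          simp only [hhdef, hxdef]
          ring
        have hKJ : K ≤ J := by
          rw [Box.le_iff_bounds]
          constructor
          · intro i
            exact le_max_left _ _
          · intro i
            have h10 : min (x i) (y t i) ≤ x i := min_le_left _ _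
            show min (x i) (y t i) + h i ≤ J.upper i
            rw [← hxh i]
            linarith
        have hKJb : K ≤ Jb t := by
          rw [Box.le_iff_bounds]
          constructor
          · intro i
            exact le_max_right _ _
          · intro i
            have h10 : min (x i) (y t i) ≤ y t i := min_le_right _ _
            show min (x i) (y t i) + h i ≤ y t i + h i
            linarith
        have hJbI₀ : Jb t ≤ I₀ := by
          rw [Box.le_iff_bounds]
          constructor
          · intro i
            exact (hyx t ht1 i).1.le
          · intro i
            exact (hyx t ht1 i).2.le
        have est1 := StokesAux.integral_sub_integral_le hint hMIcc hKJ hJle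
        have est2 := StokesAux.integral_sub_integral_le hint hMIcc hKJb hJbI₀
        have sidesJ : (∏ i, (J.upper i - J.lower i)) = ∏ i, h i :=
          Finset.prod_congr rfl fun i _ => by rw [← hxh i]; show _ = h i; ring
        have sidesJb : (∏ i, ((Jb t).upper i - (Jb t).lower i)) = ∏ i, h i :=
          Finset.prod_congr rfl fun i _ => by show y t i + h i - y t i = h i; ring
        have sidesK : (∏ i, (K.upper i - K.lower i)) = ∏ i, (h i - t * w i) :=
          Finset.prod_congr rfl fun i _ => hKside i
        rw [sidesJ, sidesK] at est1
        rw [sidesJb, sidesK] at est2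
        have htri := abs_sub_le
          (BoxIntegral.integral (Jb t) BoxIntegral.IntegrationParams.Riemann f
            BoxIntegral.BoxAdditiveMap.volume)
          (BoxIntegral.integral K BoxIntegral.IntegrationParams.Riemann f
            BoxIntegral.BoxAdditiveMap.volume)
          (BoxIntegral.integral J BoxIntegral.IntegrationParams.Riemann f
            BoxIntegral.BoxAdditiveMap.volume)
        rw [abs_sub_comm (BoxIntegral.integral K _ _ _)] at htri
        linarith [est1, est2, htri]
      have hgt : Filter.Tendsto (fun t : ℝ => 2*M*((∏ i, h i) - ∏ i, (h i - t * w i)))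
          (nhdsWithin 0 (Set.Ioi 0)) (nhds 0) := by
        have hcont : Continuous (fun t : ℝ => 2*M*((∏ i, h i) - ∏ i, (h i - t * w i))) := by
          refine continuous_const.mul (Continuous.sub continuous_const ?_)
          exact continuous_finset_prod _ fun i _ =>
            continuous_const.sub (continuous_id.mul continuous_const)
        have h11 := hcont.tendsto 0
        have h0 : (2*M*((∏ i, h i) - ∏ i, (h i - 0 * w i))) = 0 := by simp
        rw [h0] at h11
        exact h11.mono_left nhdsWithin_le_nhds
      have hsub : Filter.Tendsto
          (fun t => BoxIntegral.integral (Jb t) BoxIntegral.IntegrationParams.Riemann f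
              BoxIntegral.BoxAdditiveMap.volume
            - BoxIntegral.integral J BoxIntegral.IntegrationParams.Riemann f
              BoxIntegral.BoxAdditiveMap.volume)
          (nhdsWithin 0 (Set.Ioi 0)) (nhds 0) :=
        squeeze_zero_norm' (hbnd.mono fun t ht => by rwa [Real.norm_eq_abs]) hgt
      exact tendsto_sub_nhds_zero_iff.1 hsub
    -- conclude
    have hGy' : ∀ᶠ t in nhdsWithin (0:ℝ) (Set.Ioi 0),
        (boundaryIntegral (pullback c ω) x (fun i => x i + h i)
            - boundaryIntegral (pullback c ω) (y t) (fun i => y t i + h i)) = 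
        (boundaryIntegral (pullback c ω) x (fun i => x i + h i)
            - BoxIntegral.integral (Jb t) BoxIntegral.IntegrationParams.Riemann f
              BoxIntegral.BoxAdditiveMap.volume) := by
      filter_upwards [hevIoc] with t ht
      rw [hGy t ht]
    have hGlim : Filter.Tendsto
        (fun t => boundaryIntegral (pullback c ω) (y t) (fun i => y t i + h i))
        (nhdsWithin 0 (Set.Ioi 0))
        (nhds (boundaryIntegral (pullback c ω) x (fun i => x i + h i))) := hG
    have hGlim2 : Filter.Tendsto
        (fun t => BoxIntegral.integral (Jb t) BoxIntegral.IntegrationParams.Riemann f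
          BoxIntegral.BoxAdditiveMap.volume)
        (nhdsWithin 0 (Set.Ioi 0))
        (nhds (boundaryIntegral (pullback c ω) x (fun i => x i + h i))) := by
      refine Filter.Tendsto.congr' ?_ hGlim
      filter_upwards [hevIoc] with t ht
      exact hGy t ht
    have hkey : boundaryIntegral (pullback c ω) x (fun i => x i + h i)
        = BoxIntegral.integral J BoxIntegral.IntegrationParams.Riemann f
            BoxIntegral.BoxAdditiveMap.volume :=
      tendsto_nhds_unique hGlim2 htendν
    have hupper : (fun i => x i + h i) = J.upper := by
      funext i; rw [hxdef, hhdef]; dsimp only; ring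
    rw [hFdef]
    dsimp only
    rw [← hupper]
    exact hkey
  -- Assemble
  have hpart := BoxIntegral.Prepartition.isPartition_splitCenter I₀
  have hsumΦ := Φ.sum_partition_boxes le_rfl hpart
  have hsumν := hint.toBoxAdditive.sum_partition_boxes le_rfl hpart
  have hsameterms : ∑ J ∈ (BoxIntegral.Prepartition.splitCenter I₀).boxes, Φ J
      = ∑ J ∈ (BoxIntegral.Prepartition.splitCenter I₀).boxes, hint.toBoxAdditive J := by
    refine Finset.sum_congr rfl fun J hJ => ?_
    rw [hΦ J, stepB J hJ, BoxIntegral.Integrable.toBoxAdditive_apply]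
  have hfinal : F I₀ = BoxIntegral.integral I₀ BoxIntegral.IntegrationParams.Riemann f
      BoxIntegral.BoxAdditiveMap.volume := by
    rw [← hΦ I₀, ← hsumΦ, hsameterms, hsumν, BoxIntegral.Integrable.toBoxAdditive_apply]
  rw [StokesAux.riemannIntegral_eq hab]
  exact hfinal

end
end

section
/- Let ψ : V → U be a C¹ map between open subsets V ⊆ ℝ^p and U ⊆ ℝⁿ, and let ω be a (k−1)-form on U. If ω is derivable (in the infinitesimal-flux sense) at x = ψ(t) for some t ∈ V, then the pullback ψ^*ω is derivable at t and D(ψ^*ω)_t = ψ^*(Dω)_t, i.e., D(ψ^*ω)_t(w₁,…,w_k) = Dω_{ψ(t)}(ψ'(t)w₁,…,ψ'(t)w_k) for all w₁,…,w_k ∈ ℝ^p. -/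
open scoped BigOperators
open BoxIntegral Set

noncomputable section

/-! ### Auxiliary lemmas -/

section auxCongr

open Filter

variable {ι : Type*} [Fintype ι] {E F : Type*} [NormedAddCommGroup E] [NormedSpace ℝ E]
  [NormedAddCommGroup F] [NormedSpace ℝ F]

theorem my_integralSum_congr {I : Box ι} {f g : (ι → ℝ) → E} (vol : ι →ᵇᵃ E →L[ℝ] F)
    (h : Set.EqOn f g (Box.Icc I)) (π : TaggedPrepartition I) :
    integralSum f vol π = integralSum g vol π :=
  Finset.sum_congr rfl fun J _ => by rw [h (π.tag_mem_Icc J)]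

theorem my_hasIntegral_congr {I : Box ι} {l : IntegrationParams} {f g : (ι → ℝ) → E}
    {vol : ι →ᵇᵃ E →L[ℝ] F} {y : F} (h : Set.EqOn f g (Box.Icc I))
    (hf : BoxIntegral.HasIntegral I l f vol y) : BoxIntegral.HasIntegral I l g vol y :=
  hf.congr fun π => my_integralSum_congr vol h π

theorem my_integrable_congr {I : Box ι} {l : IntegrationParams} {f g : (ι → ℝ) → E}
    {vol : ι →ᵇᵃ E →L[ℝ] F} (h : Set.EqOn f g (Box.Icc I))
    (hf : BoxIntegral.Integrable I l f vol) : BoxIntegral.Integrable I l g vol :=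
  hf.imp fun _ hy => my_hasIntegral_congr h hy

theorem my_integral_congr {I : Box ι} {l : IntegrationParams} {f g : (ι → ℝ) → E}
    {vol : ι →ᵇᵃ E →L[ℝ] F} (h : Set.EqOn f g (Box.Icc I)) :
    BoxIntegral.integral I l f vol = BoxIntegral.integral I l g vol := by
  have hs : integralSum f vol = integralSum g vol :=
    funext fun π => my_integralSum_congr vol h π
  unfold BoxIntegral.integral BoxIntegral.Integrable BoxIntegral.HasIntegral
  rw [hs]

end auxCongr

/-- Chain rule for pullbacks of forms, pointwise on an open set. -/
theorem my_pullback_pullback {m q n k : ℕ} {A : Set (Fin m → ℝ)} {V : Set (Fin q → ℝ)}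
    (hA : IsOpen A) (hV : IsOpen V) {φ : (Fin m → ℝ) → (Fin q → ℝ)}
    {ψ : (Fin q → ℝ) → (Fin n → ℝ)} (hφ : ContDiffOn ℝ 1 φ A) (hψ : ContDiffOn ℝ 1 ψ V)
    (hm : Set.MapsTo φ A V) (ω : Form n k) {x : Fin m → ℝ} (hx : x ∈ A) :
    pullback φ (pullback ψ ω) x = pullback (ψ ∘ φ) ω x := by
  have hφd : DifferentiableAt ℝ φ x :=
    (hφ.contDiffAt (hA.mem_nhds hx)).differentiableAt one_ne_zero
  have hψd : DifferentiableAt ℝ ψ (φ x) :=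
    (hψ.contDiffAt (hV.mem_nhds (hm hx))).differentiableAt one_ne_zero
  have hc : fderiv ℝ (ψ ∘ φ) x = (fderiv ℝ ψ (φ x)).comp (fderiv ℝ φ x) :=
    fderiv_comp x hψd hφd
  ext v
  simp [pullback, hc, Function.comp]

theorem my_faceFun_congr {k : ℕ} {ω₁ ω₂ : Form (k+1) k} {a b : Fin (k+1) → ℝ}
    (i : Fin (k+1)) {c : ℝ} (hc : c ∈ Set.Icc (a i) (b i))
    (h : ∀ x ∈ Set.Icc a b, ω₁ x = ω₂ x) :
    Set.EqOn (faceFun ω₁ i c) (faceFun ω₂ i c)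
      (Set.Icc (a ∘ i.succAbove) (b ∘ i.succAbove)) := by
  intro x hx
  have hmem : i.insertNth c x ∈ Set.Icc a b := Fin.insertNth_mem_Icc.2 ⟨hc, hx⟩
  simp only [faceFun, h _ hmem]

theorem my_riemannIntegrableOn_congr {k : ℕ} {f g : (Fin k → ℝ) → ℝ} {a b : Fin k → ℝ}
    (h : Set.EqOn f g (Set.Icc a b)) (hf : RiemannIntegrableOn f a b) :
    RiemannIntegrableOn g a b := by
  obtain ⟨hab, hint⟩ := hf
  exact ⟨hab, my_integrable_congr (I := ⟨a, b, hab⟩) h hint⟩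

theorem my_riemannIntegral_congr {k : ℕ} {f g : (Fin k → ℝ) → ℝ} {a b : Fin k → ℝ}
    (h : Set.EqOn f g (Set.Icc a b)) : riemannIntegral f a b = riemannIntegral g a b := by
  unfold riemannIntegral
  split_ifs with hab
  · exact my_integral_congr (I := ⟨a, b, hab⟩) h
  · rfl

theorem my_boundaryIntegral_congr {k : ℕ} {ω₁ ω₂ : Form (k+1) k} {a b : Fin (k+1) → ℝ}
    (hab : ∀ i, a i ≤ b i) (h : ∀ x ∈ Set.Icc a b, ω₁ x = ω₂ x) :
    boundaryIntegral ω₁ a b = boundaryIntegral ω₂ a b := by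
  unfold boundaryIntegral
  refine Finset.sum_congr rfl fun i _ => ?_
  rw [my_riemannIntegral_congr (my_faceFun_congr i ⟨hab i, le_rfl⟩ h),
    my_riemannIntegral_congr (my_faceFun_congr i ⟨le_rfl, hab i⟩ h)]

/-- **Naturality of the flux exterior derivative.** If `ψ : V → U` is a `C¹` map between
open subsets `V ⊆ ℝ^p` and `U ⊆ ℝ^n` and the `k`-form `ω` on `U` is derivable at
`x = ψ t` with exterior derivative `D`, then the pullback `ψ*ω` is derivable at `t` and
`D(ψ*ω)_t = ψ*(Dω)_t`, i.e. its exterior derivative at `t` is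
`(w₁, …, w_{k+1}) ↦ D (ψ'(t) w₁, …, ψ'(t) w_{k+1})`. -/
theorem flux_deriv_naturality {p n k : ℕ}
    (V : Set (Fin p → ℝ)) (U : Set (Fin n → ℝ)) (hV : IsOpen V) (hU : IsOpen U)
    (ψ : (Fin p → ℝ) → (Fin n → ℝ)) (hψ : ContDiffOn ℝ 1 ψ V)
    (hmap : Set.MapsTo ψ V U)
    (ω : Form n k) (t : Fin p → ℝ) (ht : t ∈ V)
    (D : AlternatingMap ℝ (Fin n → ℝ) ℝ (Fin (k+1)))
    (hD : HasFluxDerivAt U ω D (ψ t)) :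
    HasFluxDerivAt V (pullback ψ ω)
      (D.compLinearMap (fderiv ℝ ψ t : (Fin p → ℝ) →L[ℝ] (Fin n → ℝ)).toLinearMap) t := by
  obtain ⟨hDint, hDder⟩ := hD
  constructor
  · -- flux integrability
    intro A φ q hA hφ hm hq hφq a b hab hsub hmem
    have hcomp : ContDiffOn ℝ 1 (ψ ∘ φ) A := hψ.comp hφ hm
    have key := hDint A (ψ ∘ φ) q hA hcomp (hmap.comp hm) hq
      (by simp [Function.comp, hφq]) a b hab hsub hmem
    intro i c hc
    have hci : c ∈ Set.Icc (a i) (b i) := by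
      simp only [Set.mem_insert_iff, Set.mem_singleton_iff] at hc
      rcases hc with rfl | rfl
      · exact ⟨le_rfl, (hab i).le⟩
      · exact ⟨(hab i).le, le_rfl⟩
    have heq : ∀ x ∈ Set.Icc a b, pullback (ψ ∘ φ) ω x = pullback φ (pullback ψ ω) x :=
      fun x hx =>
        (my_pullback_pullback hA hV hφ hψ hm ω (hsub hx)).symm
    exact my_riemannIntegrableOn_congr (my_faceFun_congr i hci heq) (key i c hc)
  · -- derivative estimate
    intro v A φ q hA hφ hm hq hφq hv ε hε K hK
    have hcomp : ContDiffOn ℝ 1 (ψ ∘ φ) A := hψ.comp hφ hm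
    have hφd : DifferentiableAt ℝ φ q :=
      (hφ.contDiffAt (hA.mem_nhds hq)).differentiableAt one_ne_zero
    have hψd : DifferentiableAt ℝ ψ t :=
      (hψ.contDiffAt (hV.mem_nhds ht)).differentiableAt one_ne_zero
    have hchain : fderiv ℝ (ψ ∘ φ) q = (fderiv ℝ ψ t).comp (fderiv ℝ φ q) := by
      rw [← hφq] at hψd ⊢
      exact fderiv_comp q hψd hφd
    have hv' : ∀ i, fderiv ℝ (ψ ∘ φ) q (e i) = fderiv ℝ ψ t (v i) := fun i => by
      rw [hchain]; simp [hv i]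
    obtain ⟨δ, hδ, H⟩ := hDder (fun i => fderiv ℝ ψ t (v i)) A (ψ ∘ φ) q hA hcomp
      (hmap.comp hm) hq (by simp [Function.comp, hφq]) hv' ε hε K hK
    refine ⟨δ, hδ, fun a b hab hsub hmem hL hr => ?_⟩
    have hbdry : boundaryIntegral (pullback φ (pullback ψ ω)) a b
        = boundaryIntegral (pullback (ψ ∘ φ) ω) a b :=
      my_boundaryIntegral_congr (fun i => (hab i).le)
        (fun x hx => my_pullback_pullback hA hV hφ hψ hm ω (hsub hx))
    have hDv : D.compLinearMap
        (fderiv ℝ ψ t : (Fin p → ℝ) →L[ℝ] (Fin n → ℝ)).toLinearMap v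
        = D (fun i => fderiv ℝ ψ t (v i)) := by
      simp
    rw [hDv, hbdry]
    exact H a b hab hsub hmem hL hr

end
end

section
/- Let ω be a continuous (k−1)-form defined on a k-block B = ∏_{i=1}^k [a_i, b_i] ⊂ ℝ^k (i.e., all component functions x ↦ ω_x(e_{i₁},…,e_{i_{k−1}}) are continuous on B). Then there exists a k-block B₁ contained in the interior B̊ of B such that: (1) for each i, the i-th side of B₁ has length (b_i − a_i)/3; (2) (1/vol B₁) ∫_{∂B₁} ω = (1/vol B) ∫_{∂B} ω. -/
open scoped BigOperators
open BoxIntegral Set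

noncomputable section

open BoxIntegral Set MeasureTheory

section Helpers
variable {k : ℕ}

lemma riemann_eq_integral {f : (Fin k → ℝ) → ℝ} {lo hi : Fin k → ℝ}
    (h : ∀ i, lo i < hi i) (hc : ContinuousOn f (Set.Icc lo hi)) :
    riemannIntegral f lo hi = ∫ t in Set.Icc lo hi, f t := by
  rw [riemannIntegral, dif_pos h]
  have hIcc : Box.Icc (⟨lo, hi, h⟩ : Box (Fin k)) = Set.Icc lo hi := rfl
  have := (ContinuousOn.hasBoxIntegral (volume : Measure (Fin k → ℝ))
    (by rw [hIcc]; exact hc) IntegrationParams.Riemann).integral_eq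
  rw [BoxAdditiveMap.volume, this]
  exact setIntegral_congr_set (Box.coe_ae_eq_Icc _)

lemma volume_slice (j : Fin k) (m : ℝ) :
    volume {x : Fin k → ℝ | x j = m} = 0 := by
  have h : {x : Fin k → ℝ | x j = m}
      = Set.pi Set.univ (fun l => if l = j then ({m} : Set ℝ) else Set.univ) := by
    ext x
    simp only [Set.mem_setOf_eq, Set.mem_pi, Set.mem_univ, forall_true_left]
    constructor
    · intro hx l; by_cases hl : l = j <;> simp [hl, hx]
    · intro hx; have := hx j; simpa using this
  rw [h, volume_pi_pi]
  exact Finset.prod_eq_zero (Finset.mem_univ j) (by simp)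

lemma setIntegral_Icc_split {f : (Fin k → ℝ) → ℝ} {lo hi : Fin k → ℝ}
    (hle : ∀ i, lo i ≤ hi i) (j : Fin k) {m : ℝ} (h1 : lo j ≤ m) (h2 : m ≤ hi j)
    (hc : ContinuousOn f (Set.Icc lo hi)) :
    ∫ t in Set.Icc lo hi, f t
      = (∫ t in Set.Icc lo (Function.update hi j m), f t)
        + ∫ t in Set.Icc (Function.update lo j m) hi, f t := by
  have hs : Set.Icc lo (Function.update hi j m) ⊆ Set.Icc lo hi := by
    apply Set.Icc_subset_Icc le_rfl
    intro l; by_cases hl : l = j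
    · subst hl; simpa using h2
    · simp [Function.update_of_ne hl]
  have ht : Set.Icc (Function.update lo j m) hi ⊆ Set.Icc lo hi := by
    apply Set.Icc_subset_Icc _ le_rfl
    intro l; by_cases hl : l = j
    · subst hl; simpa using h1
    · simp [Function.update_of_ne hl]
  have hun : Set.Icc lo hi
      = Set.Icc lo (Function.update hi j m) ∪ Set.Icc (Function.update lo j m) hi := by
    apply Set.Subset.antisymm
    · intro x hx
      rcases le_total (x j) m with h | h
      · left
        refine ⟨hx.1, fun l => ?_⟩
        by_cases hl : l = j
        · subst hl; simpa using h
        · simpa [Function.update_of_ne hl] using hx.2 l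
      · right
        refine ⟨fun l => ?_, hx.2⟩
        by_cases hl : l = j
        · subst hl; simpa using h
        · simpa [Function.update_of_ne hl] using hx.1 l
    · exact Set.union_subset hs ht
  have hdisj : AEDisjoint volume (Set.Icc lo (Function.update hi j m))
      (Set.Icc (Function.update lo j m) hi) := by
    refine measure_mono_null ?_ (volume_slice j m)
    rintro x ⟨hx1, hx2⟩
    have h1' : x j ≤ m := by simpa using hx1.2 j
    have h2' : m ≤ x j := by simpa using hx2.1 j
    exact le_antisymm h1' h2'
  have hint1 : IntegrableOn f (Set.Icc lo (Function.update hi j m)) :=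
    (hc.mono hs).integrableOn_compact isCompact_Icc
  have hint2 : IntegrableOn f (Set.Icc (Function.update lo j m) hi) :=
    (hc.mono ht).integrableOn_compact isCompact_Icc
  rw [hun, integral_union_ae hdisj measurableSet_Icc.nullMeasurableSet hint1 hint2]

lemma setIntegral_Icc_translate (f : (Fin k → ℝ) → ℝ) (lo hi v : Fin k → ℝ) :
    ∫ t in Set.Icc (lo + v) (hi + v), f t = ∫ t in Set.Icc lo hi, f (t + v) := by
  have h := (measurePreserving_add_right (volume : Measure (Fin k → ℝ)) v).setIntegral_preimage_emb
    (MeasurableEquiv.addRight v).measurableEmbedding f (Set.Icc (lo + v) (hi + v))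
  have hpre : (· + v) ⁻¹' (Set.Icc (lo + v) (hi + v)) = Set.Icc lo hi := by
    ext x
    simp only [Set.mem_preimage, Set.mem_Icc, Pi.le_def, Pi.add_apply, add_le_add_iff_right]
  rw [← h]
  · rw [hpre]

end Helpers
open BoxIntegral Set MeasureTheory

section Helpers2
variable {k : ℕ}

lemma continuousOn_param_integral {g : (Fin (k+1) → ℝ) → ℝ} {a b : Fin (k+1) → ℝ}
    (hg : ContinuousOn g (Set.Icc a b)) (j : Fin (k+1)) (lo hi : Fin k → ℝ)
    {T : Set ℝ} (c : ℝ → ℝ) (w : ℝ → (Fin k → ℝ)) (hc : Continuous c) (hw : Continuous w)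
    (hmem : ∀ t ∈ T, ∀ s ∈ Set.Icc lo hi, j.insertNth (c t) (s + w t) ∈ Set.Icc a b) :
    ContinuousOn (fun t => ∫ s in Set.Icc lo hi, g (j.insertNth (c t) (s + w t))) T := by
  obtain ⟨M, hM⟩ := (isCompact_Icc (a := a) (b := b)).exists_bound_of_continuousOn hg
  apply MeasureTheory.continuousOn_of_dominated (bound := fun _ => M)
  · intro t ht
    refine ContinuousOn.aestronglyMeasurable ?_ measurableSet_Icc
    refine hg.comp (Continuous.continuousOn ?_) (fun s hs => hmem t ht s hs)
    exact continuous_const.finInsertNth j (continuous_id.add continuous_const)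
  · intro t ht
    filter_upwards [ae_restrict_mem measurableSet_Icc] with s hs
    exact hM _ (hmem t ht s hs)
  · exact integrableOn_const isCompact_Icc.measure_lt_top.ne
  · filter_upwards [ae_restrict_mem measurableSet_Icc] with s hs
    refine hg.comp (Continuous.continuousOn ?_) (fun t ht => hmem t ht s hs)
    exact hc.finInsertNth j (continuous_const.add hw)

lemma update_comp_succAbove (g : Fin (k+1) → ℝ) (i j : Fin (k+1)) (m : ℝ)
    (l₀ : Fin k) (hl : j.succAbove l₀ = i) :
    (Function.update g i m) ∘ j.succAbove = Function.update (g ∘ j.succAbove) l₀ m := by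
  funext l
  rcases eq_or_ne l l₀ with rfl | hne
  · rw [Function.comp_apply, hl, Function.update_self, Function.update_self]
  · have hni : j.succAbove l ≠ i := by
      rw [← hl]; exact fun h => hne (Fin.succAbove_right_injective h)
    simp [Function.update_of_ne hne, Function.update_of_ne hni, Function.comp]

lemma update_comp_succAbove_self (g : Fin (k+1) → ℝ) (i : Fin (k+1)) (m : ℝ) :
    (Function.update g i m) ∘ i.succAbove = g ∘ i.succAbove := by
  funext l
  simp [Function.comp, Function.update_of_ne (Fin.succAbove_ne i l)]

lemma faceFun_continuousOn {ω : Form (k+1) k} {a b : Fin (k+1) → ℝ}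
    (hω : ∀ v : Fin k → Fin (k+1),
      ContinuousOn (fun x => ω x fun l => e (v l)) (Set.Icc a b))
    (j : Fin (k+1)) {c : ℝ} (hc : c ∈ Set.Icc (a j) (b j)) :
    ContinuousOn (faceFun ω j c) (Set.Icc (a ∘ j.succAbove) (b ∘ j.succAbove)) := by
  refine (hω j.succAbove).comp (Continuous.continuousOn ?_) (fun s hs => ?_)
  · exact continuous_const.finInsertNth j continuous_id
  · exact Fin.insertNth_mem_Icc.2 ⟨hc, hs⟩

end Helpers2
open BoxIntegral Set MeasureTheory

section Helpers3
variable {k : ℕ}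

lemma boundaryIntegral_split {ω : Form (k+1) k} {a b : Fin (k+1) → ℝ}
    (hω : ∀ v : Fin k → Fin (k+1),
      ContinuousOn (fun x => ω x fun l => e (v l)) (Set.Icc a b))
    {A B : Fin (k+1) → ℝ} (hsub : ∀ l, a l ≤ A l ∧ B l ≤ b l) (hAB : ∀ l, A l < B l)
    (i : Fin (k+1)) {m : ℝ} (h1 : A i < m) (h2 : m < B i) :
    boundaryIntegral ω A B
      = boundaryIntegral ω A (Function.update B i m)
        + boundaryIntegral ω (Function.update A i m) B := by
  unfold boundaryIntegral
  rw [← Finset.sum_add_distrib]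
  refine Finset.sum_congr rfl fun j _ => ?_
  rcases eq_or_ne j i with rfl | hji
  · rw [update_comp_succAbove_self A, update_comp_succAbove_self B,
      Function.update_self, Function.update_self]
    ring
  · obtain ⟨l₀, hl₀⟩ := Fin.exists_succAbove_eq (Ne.symm hji)
    rw [Function.update_of_ne hji, Function.update_of_ne hji,
        update_comp_succAbove B i j m l₀ hl₀, update_comp_succAbove A i j m l₀ hl₀]
    have hbase : ∀ l, (A ∘ j.succAbove) l < (B ∘ j.succAbove) l := fun l => hAB _
    have lo_l0 : (A ∘ j.succAbove) l₀ = A i := by rw [Function.comp_apply, hl₀]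
    have hi_l0 : (B ∘ j.succAbove) l₀ = B i := by rw [Function.comp_apply, hl₀]
    have hsubIcc : Set.Icc (A ∘ j.succAbove) (B ∘ j.succAbove)
        ⊆ Set.Icc (a ∘ j.succAbove) (b ∘ j.succAbove) :=
      Set.Icc_subset_Icc (fun l => (hsub _).1) (fun l => (hsub _).2)
    have h1' : ∀ l, (A ∘ j.succAbove) l < (Function.update (B ∘ j.succAbove) l₀ m) l := by
      intro l; rcases eq_or_ne l l₀ with rfl | h
      · rw [Function.update_self, lo_l0]; exact h1
      · rw [Function.update_of_ne h]; exact hbase l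
    have h2' : ∀ l, (Function.update (A ∘ j.succAbove) l₀ m) l < (B ∘ j.succAbove) l := by
      intro l; rcases eq_or_ne l l₀ with rfl | h
      · rw [Function.update_self, hi_l0]; exact h2
      · rw [Function.update_of_ne h]; exact hbase l
    have hs1 : Set.Icc (A ∘ j.succAbove) (Function.update (B ∘ j.succAbove) l₀ m)
        ⊆ Set.Icc (A ∘ j.succAbove) (B ∘ j.succAbove) := by
      refine Set.Icc_subset_Icc le_rfl fun l => ?_
      rcases eq_or_ne l l₀ with rfl | h
      · rw [Function.update_self, hi_l0]; exact h2.le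
      · rw [Function.update_of_ne h]
    have hs2 : Set.Icc (Function.update (A ∘ j.succAbove) l₀ m) (B ∘ j.succAbove)
        ⊆ Set.Icc (A ∘ j.succAbove) (B ∘ j.succAbove) := by
      refine Set.Icc_subset_Icc (fun l => ?_) le_rfl
      rcases eq_or_ne l l₀ with rfl | h
      · rw [Function.update_self, lo_l0]; exact h1.le
      · rw [Function.update_of_ne h]
    have hsplit : ∀ c ∈ Set.Icc (a j) (b j),
        riemannIntegral (faceFun ω j c) (A ∘ j.succAbove) (B ∘ j.succAbove)
          = riemannIntegral (faceFun ω j c) (A ∘ j.succAbove)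
              (Function.update (B ∘ j.succAbove) l₀ m)
            + riemannIntegral (faceFun ω j c) (Function.update (A ∘ j.succAbove) l₀ m)
              (B ∘ j.succAbove) := by
      intro c hcm
      have hcont := (faceFun_continuousOn hω j hcm).mono hsubIcc
      have e0 := riemann_eq_integral hbase hcont
      have e1 := riemann_eq_integral h1' (hcont.mono hs1)
      have e2 := riemann_eq_integral h2' (hcont.mono hs2)
      rw [e0, e1, e2]
      exact setIntegral_Icc_split (fun l => (hbase l).le) l₀
        (by rw [lo_l0]; exact h1.le) (by rw [hi_l0]; exact h2.le) hcont
    have hA : A j ∈ Set.Icc (a j) (b j) := ⟨(hsub j).1, (hAB j).le.trans (hsub j).2⟩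
    have hB : B j ∈ Set.Icc (a j) (b j) := ⟨(hsub j).1.trans (hAB j).le, (hsub j).2⟩
    rw [hsplit (B j) hB, hsplit (A j) hA]
    ring

end Helpers3
open BoxIntegral Set MeasureTheory

section Helpers4
variable {k : ℕ}

lemma face_slide_cont {ω : Form (k+1) k} {a b : Fin (k+1) → ℝ}
    (hω : ∀ v : Fin k → Fin (k+1),
      ContinuousOn (fun x => ω x fun l => e (v l)) (Set.Icc a b))
    {A B : Fin (k+1) → ℝ} (hsub : ∀ l, a l ≤ A l ∧ B l ≤ b l) (hAB : ∀ l, A l < B l)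
    (i : Fin (k+1)) {L : ℝ} (hL : 0 < L)
    (j : Fin (k+1)) (c : ℝ → ℝ) (hc : Continuous c)
    (hcm : ∀ t ∈ Set.Icc (A i) (B i - L), c t ∈ Set.Icc (a j) (b j)) :
    ContinuousOn (fun t => riemannIntegral (faceFun ω j (c t))
      ((Function.update A i t) ∘ j.succAbove) ((Function.update B i (t + L)) ∘ j.succAbove))
      (Set.Icc (A i) (B i - L)) := by
  have hsubIcc : Set.Icc (A ∘ j.succAbove) (B ∘ j.succAbove)
      ⊆ Set.Icc (a ∘ j.succAbove) (b ∘ j.succAbove) :=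
    Set.Icc_subset_Icc (fun l => (hsub _).1) (fun l => (hsub _).2)
  rcases eq_or_ne j i with rfl | hji
  · -- sliding face: bases are fixed, only the freeze value moves
    have hmem : ∀ t ∈ Set.Icc (A j) (B j - L), ∀ s ∈ Set.Icc (A ∘ j.succAbove) (B ∘ j.succAbove),
        j.insertNth (c t) (s + (fun _ => (0 : Fin k → ℝ)) t) ∈ Set.Icc a b := by
      intro t ht s hs
      refine Fin.insertNth_mem_Icc.2 ⟨hcm t ht, ?_⟩
      simpa [Function.comp_def] using hsubIcc hs
    have hcont := continuousOn_param_integral (hω j.succAbove) j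
      (A ∘ j.succAbove) (B ∘ j.succAbove) c (fun _ => (0 : Fin k → ℝ)) hc continuous_const hmem
    refine hcont.congr fun t ht => ?_
    rw [update_comp_succAbove_self, update_comp_succAbove_self,
      riemann_eq_integral (lo := A ∘ j.succAbove) (hi := B ∘ j.succAbove) (fun l => hAB _)
        ((faceFun_continuousOn hω j (hcm t ht)).mono hsubIcc)]
    refine setIntegral_congr_fun measurableSet_Icc fun s _ => ?_
    simp [faceFun]
  · -- lateral face: the base block translates in coordinate l₀
    obtain ⟨l₀, hl₀⟩ := Fin.exists_succAbove_eq (Ne.symm hji)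
    have hinj : ∀ l : Fin k, l ≠ l₀ → j.succAbove l ≠ i := by
      intro l hl h
      exact hl (Fin.succAbove_right_injective (h.trans hl₀.symm))
    set lo0 : Fin k → ℝ := A ∘ j.succAbove with hlo0
    set hi0 : Fin k → ℝ := Function.update (B ∘ j.succAbove) l₀ (A i + L) with hhi0
    set w : ℝ → (Fin k → ℝ) := fun t => Function.update (0 : Fin k → ℝ) l₀ (t - A i) with hw
    have hw0 : ∀ t, w t l₀ = t - A i := fun t => Function.update_self _ _ _
    have hw1 : ∀ t, ∀ l, l ≠ l₀ → w t l = 0 := fun t l hl => Function.update_of_ne hl _ _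
    have hlo0e : lo0 l₀ = A i := by rw [hlo0, Function.comp_apply, hl₀]
    have hhi0e : hi0 l₀ = A i + L := Function.update_self _ _ _
    have hlo0n : ∀ l, l ≠ l₀ → lo0 l = A (j.succAbove l) := fun l _ => rfl
    have hhi0n : ∀ l, l ≠ l₀ → hi0 l = B (j.succAbove l) := fun l hl => Function.update_of_ne hl _ _
    have hwc : Continuous w := by
      apply continuous_pi
      intro l
      rcases eq_or_ne l l₀ with rfl | hl
      · simp only [hw, Function.update_self]
        exact continuous_id.sub continuous_const
      · simp only [hw, Function.update_of_ne hl]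
        exact continuous_const
    have hup1 : ∀ t, (Function.update A i t) ∘ j.succAbove = lo0 + w t := by
      intro t; funext l
      rw [Function.comp_apply, Pi.add_apply]
      rcases eq_or_ne l l₀ with rfl | hl
      · rw [hl₀, Function.update_self, hlo0e, hw0]; ring
      · rw [Function.update_of_ne (hinj l hl), hw1 t l hl, hlo0n l hl, add_zero]
    have hup2 : ∀ t, (Function.update B i (t + L)) ∘ j.succAbove = hi0 + w t := by
      intro t; funext l
      rw [Function.comp_apply, Pi.add_apply]
      rcases eq_or_ne l l₀ with rfl | hl
      · rw [hl₀, Function.update_self, hhi0e, hw0]; ring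
      · rw [Function.update_of_ne (hinj l hl), hw1 t l hl, hhi0n l hl, add_zero]
    have hbnds : ∀ t ∈ Set.Icc (A i) (B i - L), ∀ l,
        a (j.succAbove l) ≤ (lo0 + w t) l ∧ (lo0 + w t) l < (hi0 + w t) l ∧
        (hi0 + w t) l ≤ b (j.succAbove l) := by
      intro t ht l
      rcases eq_or_ne l l₀ with h | hl
      · rw [h]
        have e1 : (lo0 + w t) l₀ = t := by rw [Pi.add_apply, hlo0e, hw0]; ring
        have e2 : (hi0 + w t) l₀ = t + L := by rw [Pi.add_apply, hhi0e, hw0]; ring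
        rw [e1, e2, hl₀]
        refine ⟨(hsub i).1.trans ht.1, by linarith, ?_⟩
        have h1 := ht.2; have h2 := (hsub i).2; linarith
      · have e1 : (lo0 + w t) l = A (j.succAbove l) := by
          rw [Pi.add_apply, hw1 t l hl, hlo0n l hl, add_zero]
        have e2 : (hi0 + w t) l = B (j.succAbove l) := by
          rw [Pi.add_apply, hw1 t l hl, hhi0n l hl, add_zero]
        rw [e1, e2]
        exact ⟨(hsub _).1, hAB _, (hsub _).2⟩
    have hmem : ∀ t ∈ Set.Icc (A i) (B i - L), ∀ s ∈ Set.Icc lo0 hi0,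
        j.insertNth (c t) (s + w t) ∈ Set.Icc a b := by
      intro t ht s hs
      refine Fin.insertNth_mem_Icc.2 ⟨hcm t ht, ⟨fun l => ?_, fun l => ?_⟩⟩
      · have h : (lo0 + w t) l ≤ s l + w t l := add_le_add (hs.1 l) le_rfl
        exact (hbnds t ht l).1.trans h
      · have h : s l + w t l ≤ (hi0 + w t) l := add_le_add (hs.2 l) le_rfl
        exact h.trans (hbnds t ht l).2.2
    have hcont := continuousOn_param_integral (hω j.succAbove) j lo0 hi0 c w hc hwc hmem
    refine hcont.congr fun t ht => ?_
    have hlt : ∀ l, (lo0 + w t) l < (hi0 + w t) l := fun l => (hbnds t ht l).2.1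
    have hcf : ContinuousOn (faceFun ω j (c t)) (Set.Icc (lo0 + w t) (hi0 + w t)) := by
      refine (faceFun_continuousOn hω j (hcm t ht)).mono ?_
      exact Set.Icc_subset_Icc (fun l => (hbnds t ht l).1) (fun l => (hbnds t ht l).2.2)
    rw [hup1 t, hup2 t,
      riemann_eq_integral (lo := lo0 + w t) (hi := hi0 + w t) hlt hcf,
      setIntegral_Icc_translate]
    rfl

lemma boundaryIntegral_slide_continuousOn {ω : Form (k+1) k} {a b : Fin (k+1) → ℝ}
    (hω : ∀ v : Fin k → Fin (k+1),
      ContinuousOn (fun x => ω x fun l => e (v l)) (Set.Icc a b))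
    {A B : Fin (k+1) → ℝ} (hsub : ∀ l, a l ≤ A l ∧ B l ≤ b l) (hAB : ∀ l, A l < B l)
    (i : Fin (k+1)) {L : ℝ} (hL : 0 < L) :
    ContinuousOn
      (fun t => boundaryIntegral ω (Function.update A i t) (Function.update B i (t + L)))
      (Set.Icc (A i) (B i - L)) := by
  unfold boundaryIntegral
  apply continuousOn_finset_sum
  intro j _
  refine ContinuousOn.mul continuousOn_const (ContinuousOn.sub ?_ ?_)
  · have hcB : Continuous fun t => Function.update B i (t + L) j := by
      rcases eq_or_ne j i with rfl | hji
      · simp only [Function.update_self]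
        exact continuous_id.add continuous_const
      · simp only [Function.update_of_ne hji]
        exact continuous_const
    refine face_slide_cont hω hsub hAB i hL j _ hcB fun t ht => ?_
    rcases eq_or_ne j i with rfl | hji
    · rw [Function.update_self]
      constructor
      · have h1 := ht.1; have h2 := (hsub j).1; linarith
      · have h1 := ht.2; have h2 := (hsub j).2; linarith
    · rw [Function.update_of_ne hji]
      exact ⟨(hsub j).1.trans (hAB j).le, (hsub j).2⟩
  · have hcA : Continuous fun t => Function.update A i t j := by
      rcases eq_or_ne j i with rfl | hji
      · simp only [Function.update_self]
        exact continuous_id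
      · simp only [Function.update_of_ne hji]
        exact continuous_const
    refine face_slide_cont hω hsub hAB i hL j _ hcA fun t ht => ?_
    rcases eq_or_ne j i with rfl | hji
    · rw [Function.update_self]
      refine ⟨(hsub j).1.trans ht.1, ?_⟩
      have h1 := ht.2; have h2 := (hsub j).2; linarith
    · rw [Function.update_of_ne hji]
      exact ⟨(hsub j).1, (hAB j).le.trans (hsub j).2⟩

end Helpers4
open BoxIntegral Set MeasureTheory

section Step
variable {k : ℕ}

lemma blockVol_succAbove (A B : Fin (k+1) → ℝ) (i : Fin (k+1)) :
    blockVol A B = (B i - A i) * ∏ l : Fin k, (B (i.succAbove l) - A (i.succAbove l)) :=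
  Fin.prod_univ_succAbove (fun l => B l - A l) i

lemma blockVol_update (A B : Fin (k+1) → ℝ) (i : Fin (k+1)) (c d : ℝ) :
    blockVol (Function.update A i c) (Function.update B i d)
      = (d - c) * ∏ l : Fin k, (B (i.succAbove l) - A (i.succAbove l)) := by
  rw [blockVol_succAbove _ _ i, Function.update_self, Function.update_self]
  congr 1
  refine Finset.prod_congr rfl fun l _ => ?_
  rw [Function.update_of_ne (Fin.succAbove_ne i l), Function.update_of_ne (Fin.succAbove_ne i l)]

lemma trisect_step {ω : Form (k+1) k} {a b : Fin (k+1) → ℝ}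
    (hω : ∀ v : Fin k → Fin (k+1),
      ContinuousOn (fun x => ω x fun l => e (v l)) (Set.Icc a b))
    {A B : Fin (k+1) → ℝ} (hsub : ∀ l, a l ≤ A l ∧ B l ≤ b l) (hAB : ∀ l, A l < B l)
    (i : Fin (k+1)) :
    ∃ c d : ℝ, A i < c ∧ c < d ∧ d < B i ∧ d - c = (B i - A i) / 3 ∧
      boundaryIntegral ω (Function.update A i c) (Function.update B i d)
        = boundaryIntegral ω A B / 3 ∧
      blockVol (Function.update A i c) (Function.update B i d) = blockVol A B / 3 := by
  set L : ℝ := (B i - A i) / 3 with hLdef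
  have hL : 0 < L := by have := hAB i; rw [hLdef]; linarith
  set f : ℝ → ℝ :=
    fun t => boundaryIntegral ω (Function.update A i t) (Function.update B i (t + L)) with hf
  -- splitting identities
  have hAi : a i ≤ A i := (hsub i).1
  have hBi : B i ≤ b i := (hsub i).2
  have hsub1 : ∀ l, a l ≤ Function.update A i (A i + L) l ∧ B l ≤ b l := by
    intro l
    rcases eq_or_ne l i with rfl | hl
    · rw [Function.update_self]; exact ⟨by linarith, (hsub l).2⟩
    · rw [Function.update_of_ne hl]; exact hsub l
  have hAB1 : ∀ l, Function.update A i (A i + L) l < B l := by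
    intro l
    rcases eq_or_ne l i with rfl | hl
    · rw [Function.update_self]; have := hAB l; rw [hLdef]; linarith
    · rw [Function.update_of_ne hl]; exact hAB l
  have split1 := boundaryIntegral_split hω hsub hAB i
    (show A i < A i + L by linarith) (show A i + L < B i by rw [hLdef]; have := hAB i; linarith)
  have split2 := boundaryIntegral_split hω hsub1 hAB1 i
    (show Function.update A i (A i + L) i < A i + 2*L by rw [Function.update_self]; linarith)
    (show A i + 2*L < B i by rw [hLdef]; have := hAB i; linarith)
  rw [Function.update_idem] at split2
  -- identify the three pieces with values of f
  have hfA : f (A i) = boundaryIntegral ω A (Function.update B i (A i + L)) := by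
    rw [hf]; simp only [Function.update_eq_self]
  have hfm1 : f (A i + L) = boundaryIntegral ω (Function.update A i (A i + L))
      (Function.update B i (A i + 2*L)) := by
    show boundaryIntegral ω (Function.update A i (A i + L))
      (Function.update B i (A i + L + L)) = _
    have h2 : A i + L + L = A i + 2*L := by ring
    rw [h2]
  have hfm2 : f (A i + 2*L) = boundaryIntegral ω (Function.update A i (A i + 2*L)) B := by
    show boundaryIntegral ω (Function.update A i (A i + 2*L))
      (Function.update B i (A i + 2*L + L)) = _
    have h2 : A i + 2*L + L = B i := by rw [hLdef]; ring
    rw [h2, Function.update_eq_self]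
  have hsum : f (A i) + f (A i + L) + f (A i + 2*L) = boundaryIntegral ω A B := by
    rw [hfA, hfm1, hfm2, split1, split2]; ring
  -- continuity of f
  have hcontf : ContinuousOn f (Set.Icc (A i) (B i - L)) :=
    boundaryIntegral_slide_continuousOn hω hsub hAB i hL
  have hBL : B i - L = A i + 2*L := by rw [hLdef]; ring
  set θ : ℝ := boundaryIntegral ω A B / 3 with hθ
  -- find t₀ in the open interval with f t₀ = θ
  have key : ∃ t₀ ∈ Set.Ioo (A i) (A i + 2*L), f t₀ = θ := by
    have hc1 : ContinuousOn f (Set.Icc (A i) (A i + L)) := by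
      refine hcontf.mono (Set.Icc_subset_Icc le_rfl ?_)
      rw [hBL]; linarith
    have hc2 : ContinuousOn f (Set.Icc (A i + L) (A i + 2*L)) := by
      refine hcontf.mono (Set.Icc_subset_Icc (by linarith) ?_)
      rw [hBL]
    have hle1 : A i ≤ A i + L := by linarith
    have hle2 : A i + L ≤ A i + 2*L := by linarith
    rcases lt_trichotomy (f (A i + L)) θ with hy | hy | hy
    · have hor : θ < f (A i) ∨ θ < f (A i + 2*L) := by
        by_contra hcon
        push_neg at hcon
        rw [hθ] at hy hcon
        linarith [hcon.1, hcon.2, hsum]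
      rcases hor with hx | hz
      · obtain ⟨t₀, ht₀, hft₀⟩ := intermediate_value_Ioo' hle1 hc1 ⟨hy, hx⟩
        exact ⟨t₀, ⟨ht₀.1, by linarith [ht₀.2]⟩, hft₀⟩
      · obtain ⟨t₀, ht₀, hft₀⟩ := intermediate_value_Ioo hle2 hc2 ⟨hy, hz⟩
        exact ⟨t₀, ⟨by linarith [ht₀.1], ht₀.2⟩, hft₀⟩
    · exact ⟨A i + L, ⟨by linarith, by linarith⟩, hy⟩
    · have hor : f (A i) < θ ∨ f (A i + 2*L) < θ := by
        by_contra hcon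
        push_neg at hcon
        rw [hθ] at hy hcon
        linarith [hcon.1, hcon.2, hsum]
      rcases hor with hx | hz
      · obtain ⟨t₀, ht₀, hft₀⟩ := intermediate_value_Ioo hle1 hc1 ⟨hx, hy⟩
        exact ⟨t₀, ⟨ht₀.1, by linarith [ht₀.2]⟩, hft₀⟩
      · obtain ⟨t₀, ht₀, hft₀⟩ := intermediate_value_Ioo' hle2 hc2 ⟨hz, hy⟩
        exact ⟨t₀, ⟨by linarith [ht₀.1], ht₀.2⟩, hft₀⟩
  obtain ⟨t₀, ht₀, hft₀⟩ := key
  refine ⟨t₀, t₀ + L, ht₀.1, by linarith, ?_, by rw [hLdef]; ring, hft₀, ?_⟩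
  · linarith [ht₀.2, hBL]
  · rw [blockVol_update, blockVol_succAbove A B i, hLdef]
    ring

end Step

/-- **Trisection Lemma for `(k+1)`-blocks.** If `ω` is a continuous `k`-form on the
`(k+1)`-block `[a,b] ⊂ ℝ^{k+1}` (all component functions are continuous on the block),
then there is a `(k+1)`-block `B₁` inside the interior of `[a,b]` whose sides measure one
third of the corresponding sides of `[a,b]` and whose normalized boundary flux of `ω`
equals that of `[a,b]`. -/
theorem trisection_lemma_blocks {k : ℕ} (a b : Fin (k+1) → ℝ) (hab : ∀ i, a i < b i)
    (ω : Form (k+1) k)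
    (hω : ∀ v : Fin k → Fin (k+1),
      ContinuousOn (fun x => ω x fun l => e (v l)) (Set.Icc a b)) :
    ∃ a₁ b₁ : Fin (k+1) → ℝ,
      (∀ i, a i < a₁ i ∧ a₁ i < b₁ i ∧ b₁ i < b i) ∧
      (∀ i, b₁ i - a₁ i = (b i - a i) / 3) ∧
      (1 / blockVol a₁ b₁) * boundaryIntegral ω a₁ b₁
        = (1 / blockVol a b) * boundaryIntegral ω a b := by
  have hVpos : ∀ {A B : Fin (k+1) → ℝ}, (∀ l, A l < B l) → 0 < blockVol A B := by
    intro A B h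
    exact Finset.prod_pos fun l _ => sub_pos.2 (h l)
  have main : ∀ n : ℕ, n ≤ k + 1 → ∃ A B : Fin (k+1) → ℝ,
      (∀ l, a l ≤ A l ∧ B l ≤ b l) ∧ (∀ l, A l < B l) ∧
      (∀ l : Fin (k+1), (l : ℕ) < n → a l < A l ∧ B l < b l ∧ B l - A l = (b l - a l) / 3) ∧
      (∀ l : Fin (k+1), n ≤ (l : ℕ) → A l = a l ∧ B l = b l) ∧
      blockVol A B * boundaryIntegral ω a b = blockVol a b * boundaryIntegral ω A B := by
    intro n
    induction n with
    | zero =>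
      intro _
      exact ⟨a, b, fun l => ⟨le_rfl, le_rfl⟩, hab,
        fun l hl => absurd hl (Nat.not_lt_zero _), fun l _ => ⟨rfl, rfl⟩, by ring⟩
    | succ n ih =>
      intro hn
      obtain ⟨A, B, h1, h2, h3, h4, h5⟩ := ih (Nat.le_of_succ_le hn)
      have hnk : n < k + 1 := hn
      set i : Fin (k+1) := ⟨n, hnk⟩ with hidef
      obtain ⟨c, d, hc1, hcd, hd1, hlen, hflux, hvol⟩ := trisect_step hω h1 h2 i
      refine ⟨Function.update A i c, Function.update B i d, ?_, ?_, ?_, ?_, ?_⟩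
      · intro l
        rcases eq_or_ne l i with rfl | hl
        · rw [Function.update_self, Function.update_self]
          exact ⟨(h1 i).1.trans hc1.le, hd1.le.trans (h1 i).2⟩
        · rw [Function.update_of_ne hl, Function.update_of_ne hl]
          exact h1 l
      · intro l
        rcases eq_or_ne l i with rfl | hl
        · rw [Function.update_self, Function.update_self]; exact hcd
        · rw [Function.update_of_ne hl, Function.update_of_ne hl]; exact h2 l
      · intro l hl
        rcases eq_or_ne l i with rfl | hli
        · rw [Function.update_self, Function.update_self]
          have hAa : A i = a i := (h4 i le_rfl).1
          have hBb : B i = b i := (h4 i le_rfl).2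
          refine ⟨hAa ▸ hc1, hBb ▸ hd1, ?_⟩
          rw [hlen, hAa, hBb]
        · have hlv : (l : ℕ) < n := by
            rcases Nat.lt_succ_iff_lt_or_eq.1 hl with h | h
            · exact h
            · exact absurd (Fin.ext h : l = i) hli
          rw [Function.update_of_ne hli, Function.update_of_ne hli]
          exact h3 l hlv
      · intro l hl
        have hli : l ≠ i := by
          intro h
          rw [h] at hl
          simp [hidef] at hl
          try omega
        rw [Function.update_of_ne hli, Function.update_of_ne hli]
        exact h4 l (by omega)
      · rw [hflux, hvol]
        linarith [h5]
  obtain ⟨A, B, h1, h2, h3, h4, h5⟩ := main (k+1) le_rfl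
  have h3' := fun l : Fin (k+1) => h3 l l.isLt
  refine ⟨A, B, fun l => ⟨(h3' l).1, h2 l, (h3' l).2.1⟩, fun l => (h3' l).2.2, ?_⟩
  have hV1 : 0 < blockVol A B := hVpos h2
  have hV : 0 < blockVol a b := hVpos hab
  field_simp
  linarith [h5]

end
end

section
/- Let ω be a (k−1)-form defined on a k-block B = ∏_{i=1}^k [a_i, b_i] ⊂ ℝ^k that is flux-continuous on B and such that ∫_{∂β} ω exists (as a Riemann integral) for every k-block β ⊆ B. Then there exists a k-block B₁ contained in the interior B̊ of B such that: (1) for each i, the i-th side of B₁ has length (b_i − a_i)/3; (2) (1/vol B₁) ∫_{∂B₁} ω = (1/vol B) ∫_{∂B} ω. -/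
open scoped BigOperators
open BoxIntegral Set

noncomputable section

namespace TrisectAux

open scoped Classical

/-- Lower corner of the grid cell indexed by `j` in the trisection grid of `[a,b]`. -/
def gLo {k : ℕ} (a b : Fin k → ℝ) (j : Fin k → Fin 3) : Fin k → ℝ :=
  fun i => a i + ((j i : ℕ) : ℝ) * ((b i - a i) / 3)

/-- Upper corner of the grid cell indexed by `j`. -/
def gHi {k : ℕ} (a b : Fin k → ℝ) (j : Fin k → Fin 3) : Fin k → ℝ :=
  fun i => a i + (((j i : ℕ) : ℝ) + 1) * ((b i - a i) / 3)

lemma gLo_lt_gHi {k : ℕ} {a b : Fin k → ℝ} (hab : ∀ i, a i < b i) (j : Fin k → Fin 3)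
    (i : Fin k) : gLo a b j i < gHi a b j i := by
  have h3 : 0 < (b i - a i) / 3 := by linarith [hab i]
  unfold gLo gHi
  nlinarith [h3]

lemma jval_le_two {k : ℕ} (j : Fin k → Fin 3) (i : Fin k) : ((j i : ℕ) : ℝ) ≤ 2 := by
  exact_mod_cast Nat.lt_succ_iff.mp (j i).isLt

/-- The grid cell as a `BoxIntegral.Box`. -/
def cellBox {k : ℕ} (a b : Fin k → ℝ) (hab : ∀ i, a i < b i) (j : Fin k → Fin 3) :
    BoxIntegral.Box (Fin k) :=
  ⟨gLo a b j, gHi a b j, gLo_lt_gHi hab j⟩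

lemma cell_le {k : ℕ} (a b : Fin k → ℝ) (hab : ∀ i, a i < b i) (j : Fin k → Fin 3) :
    cellBox a b hab j ≤ ⟨a, b, hab⟩ := by
  rw [BoxIntegral.Box.le_iff_bounds]
  constructor
  · intro i
    have h3 : 0 ≤ (b i - a i) / 3 := by linarith [hab i]
    have := mul_nonneg (Nat.cast_nonneg (α := ℝ) (j i : ℕ)) h3
    show a i ≤ gLo a b j i
    unfold gLo; linarith
  · intro i
    have h3 : 0 ≤ (b i - a i) / 3 := by linarith [hab i]
    have hm := jval_le_two j i
    show gHi a b j i ≤ b i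
    unfold gHi; nlinarith

lemma cellBox_injective {k : ℕ} (a b : Fin k → ℝ) (hab : ∀ i, a i < b i) :
    Function.Injective (cellBox a b hab) := by
  intro j₁ j₂ h
  funext i
  have hlow : gLo a b j₁ i = gLo a b j₂ i := by
    have := congrArg BoxIntegral.Box.lower h
    exact congrFun this i
  unfold gLo at hlow
  have h3 : (0:ℝ) < (b i - a i) / 3 := by linarith [hab i]
  have : ((j₁ i : ℕ) : ℝ) = ((j₂ i : ℕ) : ℝ) := by
    have := mul_right_cancel₀ (ne_of_gt h3) (by linarith : ((j₁ i : ℕ) : ℝ) * ((b i - a i)/3) = ((j₂ i : ℕ) : ℝ) * ((b i - a i)/3))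
    exact this
  exact Fin.val_injective (by exact_mod_cast this)

/-- The trisection grid partition of the box `[a,b]`. -/
def gridPartition {k : ℕ} (a b : Fin k → ℝ) (hab : ∀ i, a i < b i) :
    BoxIntegral.Prepartition (⟨a, b, hab⟩ : BoxIntegral.Box (Fin k)) where
  boxes := Finset.univ.image (cellBox a b hab)
  le_of_mem' := by
    intro J hJ
    rcases Finset.mem_image.mp hJ with ⟨j, -, rfl⟩
    exact cell_le a b hab j
  pairwiseDisjoint := by
    intro J₁ hJ₁ J₂ hJ₂ hne
    rcases Finset.mem_image.mp (Finset.mem_coe.mp hJ₁) with ⟨j₁, -, rfl⟩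
    rcases Finset.mem_image.mp (Finset.mem_coe.mp hJ₂) with ⟨j₂, -, rfl⟩
    have hj : j₁ ≠ j₂ := fun hj => hne (congrArg _ hj)
    obtain ⟨i, hi⟩ := Function.ne_iff.mp hj
    have hvi : (j₁ i : ℕ) ≠ (j₂ i : ℕ) := fun hv => hi (Fin.val_injective hv)
    rw [Function.onFun, Set.disjoint_left]
    intro x hx₁ hx₂
    have h1 : x i ∈ Set.Ioc (gLo a b j₁ i) (gHi a b j₁ i) := hx₁ i
    have h2 : x i ∈ Set.Ioc (gLo a b j₂ i) (gHi a b j₂ i) := hx₂ i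
    have h3 : (0:ℝ) < (b i - a i) / 3 := by linarith [hab i]
    rcases Nat.lt_or_ge (j₁ i : ℕ) (j₂ i : ℕ) with hlt | hge
    · have hm : ((j₁ i : ℕ) : ℝ) + 1 ≤ ((j₂ i : ℕ) : ℝ) := by exact_mod_cast hlt
      have hA : x i ≤ gHi a b j₁ i := h1.2
      have hB : gLo a b j₂ i < x i := h2.1
      unfold gHi at hA; unfold gLo at hB
      nlinarith
    · have hlt' : (j₂ i : ℕ) < (j₁ i : ℕ) := lt_of_le_of_ne hge (Ne.symm hvi)
      have hm : ((j₂ i : ℕ) : ℝ) + 1 ≤ ((j₁ i : ℕ) : ℝ) := by exact_mod_cast hlt'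
      have hA : x i ≤ gHi a b j₂ i := h2.2
      have hB : gLo a b j₁ i < x i := h1.1
      unfold gHi at hA; unfold gLo at hB
      nlinarith

lemma grid_isPartition {k : ℕ} (a b : Fin k → ℝ) (hab : ∀ i, a i < b i) :
    (gridPartition a b hab).IsPartition := by
  classical
  intro x hx
  refine ⟨cellBox a b hab
    (fun i => if x i ≤ a i + (b i - a i)/3 then 0
      else if x i ≤ a i + 2*((b i - a i)/3) then 1 else 2),
    by
      show _ ∈ (gridPartition a b hab).boxes
      have hboxes : (gridPartition a b hab).boxes = Finset.univ.image (cellBox a b hab) := rfl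
      rw [hboxes]
      exact Finset.mem_image_of_mem _ (Finset.mem_univ _), ?_⟩
  intro i
  have hxi : x i ∈ Set.Ioc (a i) (b i) := hx i
  have hx1 : a i < x i := hxi.1
  have hx2 : x i ≤ b i := hxi.2
  have h3 : (0:ℝ) < (b i - a i) / 3 := by linarith [hab i]
  rw [Set.mem_Ioc]
  simp only [cellBox, gLo, gHi]
  split_ifs with hc1 hc2
  · norm_num; constructor <;> linarith
  · norm_num; constructor <;> linarith
  · norm_num; constructor <;> linarith

lemma riemann_grid_sum {k : ℕ} (g : (Fin k → ℝ) → ℝ) (a b : Fin k → ℝ)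
    (hab : ∀ i, a i < b i) (hg : RiemannIntegrableOn g a b) :
    riemannIntegral g a b = ∑ j : Fin k → Fin 3, riemannIntegral g (gLo a b j) (gHi a b j) := by
  obtain ⟨hab', hInt⟩ := hg
  have hInt' : BoxIntegral.Integrable ⟨a, b, hab⟩ BoxIntegral.IntegrationParams.Riemann g
      BoxIntegral.BoxAdditiveMap.volume := hInt
  have hsum := hInt'.toBoxAdditive.sum_partition_boxes le_rfl (grid_isPartition a b hab)
  simp only [BoxIntegral.Integrable.toBoxAdditive_apply] at hsum
  rw [riemannIntegral, dif_pos hab, ← hsum]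
  have hboxes : (gridPartition a b hab).boxes = Finset.univ.image (cellBox a b hab) := rfl
  rw [hboxes]
  rw [Finset.sum_image (fun j₁ _ j₂ _ h => cellBox_injective a b hab h)]
  refine Finset.sum_congr rfl fun j _ => ?_
  rw [riemannIntegral, dif_pos (gLo_lt_gHi hab j)]
  rfl


/-- Helper: face integral at relative height `r` (in units of `(b i - a i)/3`) over the
`j'`-cell of the face grid. -/
def faceInt {k : ℕ} (ω : Form (k+1) k) (i : Fin (k+1)) (a b : Fin (k+1) → ℝ)
    (j' : Fin k → Fin 3) (r : ℝ) : ℝ :=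
  riemannIntegral (faceFun ω i (a i + r * ((b i - a i) / 3)))
    (gLo (a ∘ i.succAbove) (b ∘ i.succAbove) j') (gHi (a ∘ i.succAbove) (b ∘ i.succAbove) j')

lemma cell_face_eq {k : ℕ} (ω : Form (k+1) k) (i : Fin (k+1)) (a b : Fin (k+1) → ℝ)
    (m : Fin 3) (j' : Fin k → Fin 3) :
    riemannIntegral (faceFun ω i (gHi a b ((Fin.insertNthEquiv (fun _ => Fin 3) i) (m, j')) i))
        (gLo a b ((Fin.insertNthEquiv (fun _ => Fin 3) i) (m, j')) ∘ i.succAbove)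
        (gHi a b ((Fin.insertNthEquiv (fun _ => Fin 3) i) (m, j')) ∘ i.succAbove)
      - riemannIntegral
        (faceFun ω i (gLo a b ((Fin.insertNthEquiv (fun _ => Fin 3) i) (m, j')) i))
        (gLo a b ((Fin.insertNthEquiv (fun _ => Fin 3) i) (m, j')) ∘ i.succAbove)
        (gHi a b ((Fin.insertNthEquiv (fun _ => Fin 3) i) (m, j')) ∘ i.succAbove)
    = faceInt ω i a b j' (((m : ℕ) : ℝ) + 1) - faceInt ω i a b j' ((m : ℕ) : ℝ) := by
  have hj : (Fin.insertNthEquiv (fun _ => Fin 3) i) (m, j') = i.insertNth m j' := rfl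
  have h1 : gHi a b (i.insertNth m j') i = a i + (((m : ℕ) : ℝ) + 1) * ((b i - a i) / 3) := by
    unfold gHi; rw [Fin.insertNth_apply_same]
  have h2 : gLo a b (i.insertNth m j') i = a i + ((m : ℕ) : ℝ) * ((b i - a i) / 3) := by
    unfold gLo; rw [Fin.insertNth_apply_same]
  have h3 : gLo a b (i.insertNth m j') ∘ i.succAbove
      = gLo (a ∘ i.succAbove) (b ∘ i.succAbove) j' := by
    funext l
    simp only [gLo, Function.comp_apply, Fin.insertNth_apply_succAbove]
  have h4 : gHi a b (i.insertNth m j') ∘ i.succAbove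
      = gHi (a ∘ i.succAbove) (b ∘ i.succAbove) j' := by
    funext l
    simp only [gHi, Function.comp_apply, Fin.insertNth_apply_succAbove]
  rw [hj, h1, h2, h3, h4]
  rfl

lemma face_telescope {k : ℕ} (ω : Form (k+1) k) (i : Fin (k+1)) (a b : Fin (k+1) → ℝ)
    (j' : Fin k → Fin 3) :
    ∑ m : Fin 3, (faceInt ω i a b j' (((m : ℕ) : ℝ) + 1) - faceInt ω i a b j' ((m : ℕ) : ℝ))
      = faceInt ω i a b j' 3 - faceInt ω i a b j' 0 := by
  rw [Fin.sum_univ_three]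
  norm_num

lemma boundary_grid_sum {k : ℕ} (ω : Form (k+1) k) (a b : Fin (k+1) → ℝ)
    (hab : ∀ i, a i < b i) (hbi : BoundaryIntegrable ω a b) :
    ∑ j : Fin (k+1) → Fin 3, boundaryIntegral ω (gLo a b j) (gHi a b j)
      = boundaryIntegral ω a b := by
  unfold boundaryIntegral
  rw [Finset.sum_comm]
  refine Finset.sum_congr rfl fun i _ => ?_
  rw [← Finset.mul_sum]
  congr 1
  have hab' : ∀ l, (a ∘ i.succAbove) l < (b ∘ i.succAbove) l := fun l => hab _
  rw [riemann_grid_sum _ _ _ hab' (hbi i (b i) (Set.mem_insert_iff.mpr (Or.inr rfl))),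
      riemann_grid_sum _ _ _ hab' (hbi i (a i) (Set.mem_insert _ _)),
      ← Finset.sum_sub_distrib]
  rw [← Equiv.sum_comp (Fin.insertNthEquiv (fun _ => Fin 3) i)]
  rw [Fintype.sum_prod_type, Finset.sum_comm]
  refine Finset.sum_congr rfl fun j' _ => ?_
  refine Eq.trans (Finset.sum_congr rfl fun m _ => cell_face_eq ω i a b m j') ?_
  rw [face_telescope]
  unfold faceInt
  rw [show a i + (3 : ℝ) * ((b i - a i) / 3) = b i by ring,
      show a i + (0 : ℝ) * ((b i - a i) / 3) = a i by ring]

end TrisectAux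

open TrisectAux

/-- **Trisection Lemma under flux-continuity.** If `ω` is a flux-continuous `k`-form on the
`(k+1)`-block `[a,b] ⊂ ℝ^{k+1}` whose boundary flux exists (as a Riemann integral) on every
sub-block of `[a,b]`, then there is a `(k+1)`-block `B₁` inside the interior of `[a,b]`
whose sides measure one third of the corresponding sides of `[a,b]` and whose normalized
boundary flux of `ω` equals that of `[a,b]`. -/
theorem trisection_lemma_flux_continuous {k : ℕ} (a b : Fin (k+1) → ℝ)
    (hab : ∀ i, a i < b i) (ω : Form (k+1) k)
    (hω : FluxContinuousOn ω a b)
    (hint : ∀ c d : Fin (k+1) → ℝ, (∀ i, c i < d i) → Set.Icc c d ⊆ Set.Icc a b →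
      BoundaryIntegrable ω c d) :
    ∃ a₁ b₁ : Fin (k+1) → ℝ,
      (∀ i, a i < a₁ i ∧ a₁ i < b₁ i ∧ b₁ i < b i) ∧
      (∀ i, b₁ i - a₁ i = (b i - a i) / 3) ∧
      (1 / blockVol a₁ b₁) * boundaryIntegral ω a₁ b₁
        = (1 / blockVol a b) * boundaryIntegral ω a b := by
  classical
  set hs : Fin (k+1) → ℝ := fun i => (b i - a i) / 3 with hhs
  have hs_pos : ∀ i, 0 < hs i := fun i => by simp only [hhs]; linarith [hab i]
  have hs_lt : ∀ i, hs i < b i - a i := fun i => by simp only [hhs]; linarith [hab i]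
  have hcont := hω hs (fun i => ⟨hs_pos i, hs_lt i⟩)
  set S : Set (Fin (k+1) → ℝ) := {y | ∀ i, a i ≤ y i ∧ y i + hs i ≤ b i} with hSdef
  set f : (Fin (k+1) → ℝ) → ℝ := fun y => boundaryIntegral ω y (fun i => y i + hs i) with hfdef
  set S' : Set (Fin (k+1) → ℝ) := {y | ∀ i, a i < y i ∧ y i + hs i < b i} with hS'def
  have hS'subS : S' ⊆ S := fun y hy i => ⟨(hy i).1.le, (hy i).2.le⟩
  have hS'eq : S' = Set.univ.pi (fun i => Set.Ioo (a i) (b i - hs i)) := by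
    ext y
    simp only [hS'def, Set.mem_setOf_eq, Set.mem_pi, Set.mem_univ, true_implies, Set.mem_Ioo,
      lt_sub_iff_add_lt]
  have hS'open : IsOpen S' := by
    rw [hS'eq]; exact isOpen_set_pi Set.finite_univ (fun i _ => isOpen_Ioo)
  have hS'conv : Convex ℝ S' := by
    rw [hS'eq]; exact convex_pi (fun i _ => convex_Ioo _ _)
  have hfat : ∀ x ∈ S', ContinuousAt f x := fun x hx =>
    (hcont x (hS'subS hx)).continuousAt (Filter.mem_of_superset (hS'open.mem_nhds hx) hS'subS)
  -- grid sum
  have hgrid : ∑ j : Fin (k+1) → Fin 3, f (gLo a b j) = boundaryIntegral ω a b := by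
    rw [← boundary_grid_sum ω a b hab (hint a b hab Set.Subset.rfl)]
    refine Finset.sum_congr rfl fun j _ => ?_
    show boundaryIntegral ω (gLo a b j) (fun i => gLo a b j i + hs i)
      = boundaryIntegral ω (gLo a b j) (gHi a b j)
    congr 1
    funext i
    simp only [gLo, gHi, hhs]
    ring
  set c' : ℝ := boundaryIntegral ω a b / 3 ^ (k+1) with hc'
  have h3ne : (3:ℝ) ^ (k+1) ≠ 0 := by positivity
  have hcard : (Finset.univ : Finset (Fin (k+1) → Fin 3)).card = 3 ^ (k+1) := by
    simp [Fintype.card_fun]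
  have hsum3 : ∑ _j : Fin (k+1) → Fin 3, c' = boundaryIntegral ω a b := by
    rw [Finset.sum_const, hcard, nsmul_eq_mul, hc']
    push_cast
    field_simp
  -- grid points are in S
  have hgridS : ∀ j : Fin (k+1) → Fin 3, gLo a b j ∈ S := by
    intro j
    simp only [hSdef, Set.mem_setOf_eq]
    intro i
    have hm0 : (0:ℝ) ≤ ((j i : ℕ) : ℝ) := Nat.cast_nonneg _
    have hm2 := jval_le_two j i
    have h3 := hs_pos i
    simp only [gLo, hhs] at *
    constructor
    · nlinarith
    · nlinarith
  -- the center of the block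
  have hctr : (fun i => a i + hs i) ∈ S' := by
    simp only [hS'def, Set.mem_setOf_eq, hhs]
    intro i
    constructor
    · linarith [hab i]
    · linarith [hab i]
  have hctrgrid : gLo a b (fun _ => (1 : Fin 3)) = fun i => a i + hs i := by
    funext i
    simp only [gLo, hhs, show ((1 : Fin 3) : ℕ) = 1 from rfl]
    norm_num
  -- limits from the interior at grid points
  have hkey : ∀ j : Fin (k+1) → Fin 3,
      Filter.Tendsto (fun t : ℝ => f (gLo a b j + t • ((fun i => a i + hs i) - gLo a b j)))
        (nhdsWithin 0 (Set.Ioi 0)) (nhds (f (gLo a b j)))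
      ∧ ∀ t ∈ Set.Ioc (0:ℝ) (1/2),
          (gLo a b j + t • ((fun i => a i + hs i) - gLo a b j)) ∈ S' := by
    intro j
    have hpath : ∀ t ∈ Set.Ioc (0:ℝ) (1/2),
        (gLo a b j + t • ((fun i => a i + hs i) - gLo a b j)) ∈ S' := by
      intro t ht
      simp only [hS'def, Set.mem_setOf_eq]
      intro i
      have hm0 : (0:ℝ) ≤ ((j i : ℕ) : ℝ) := Nat.cast_nonneg _
      have hm2 := jval_le_two j i
      have h3 := hs_pos i
      have ht1 := ht.1
      have ht2 := ht.2
      simp only [Pi.add_apply, Pi.smul_apply, Pi.sub_apply, smul_eq_mul, gLo, hhs] at *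
      constructor
      · nlinarith [mul_pos ht1 h3, mul_nonneg (mul_nonneg hm0 h3.le)
          (by linarith : (0:ℝ) ≤ 1 - t)]
      · nlinarith [mul_pos ht1 h3, mul_nonneg (mul_nonneg (by linarith : (0:ℝ) ≤ 2 - ((j i : ℕ) : ℝ))
          (by linarith : (0:ℝ) ≤ 1 - t)) h3.le]
    refine ⟨?_, hpath⟩
    have hcc : Continuous (fun t : ℝ => gLo a b j + t • ((fun i => a i + hs i) - gLo a b j)) :=
      continuous_const.add (continuous_id.smul continuous_const)
    have h0 : Filter.Tendsto (fun t : ℝ => gLo a b j + t • ((fun i => a i + hs i) - gLo a b j))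
        (nhdsWithin 0 (Set.Ioi 0)) (nhds (gLo a b j)) := by
      refine Filter.Tendsto.mono_left ?_ nhdsWithin_le_nhds
      simpa using hcc.tendsto 0
    have hmemS : ∀ᶠ t in nhdsWithin (0:ℝ) (Set.Ioi 0),
        (gLo a b j + t • ((fun i => a i + hs i) - gLo a b j)) ∈ S := by
      filter_upwards [Ioc_mem_nhdsGT_of_mem
        (by norm_num : (0:ℝ) ∈ Set.Ico (0:ℝ) (1/2))] with t ht
      exact hS'subS (hpath t ht)
    have hcomp := Filter.Tendsto.comp ((hcont (gLo a b j) (hgridS j)).tendsto)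
      (tendsto_nhdsWithin_iff.mpr (And.intro h0 hmemS))
    exact hcomp
  by_cases hP : ∃ x ∈ S', f x ≤ c'
  · by_cases hQ : ∃ x ∈ S', c' ≤ f x
    · -- intermediate value theorem
      obtain ⟨x₁, hx₁, hfx₁⟩ := hP
      obtain ⟨x₂, hx₂, hfx₂⟩ := hQ
      have hseg : ∀ t ∈ Set.Icc (0:ℝ) 1, ((1 - t) • x₁ + t • x₂) ∈ S' := fun t ht =>
        hS'conv hx₁ hx₂ (by linarith [ht.2]) ht.1 (by ring)
      have haff : Continuous (fun t : ℝ => (1 - t) • x₁ + t • x₂) :=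
        ((continuous_const.sub continuous_id).smul continuous_const).add
          (continuous_id.smul continuous_const)
      have hgc : ContinuousOn (fun t : ℝ => f ((1 - t) • x₁ + t • x₂)) (Set.Icc 0 1) := by
        intro t ht
        have hca : ContinuousAt (f ∘ (fun t : ℝ => (1 - t) • x₁ + t • x₂)) t :=
          ContinuousAt.comp (hfat _ (hseg t ht)) haff.continuousAt
        exact hca.continuousWithinAt
      have hiv := intermediate_value_Icc (by norm_num : (0:ℝ) ≤ 1) hgc
      have hmem : c' ∈ Set.Icc ((fun t : ℝ => f ((1 - t) • x₁ + t • x₂)) 0)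
          ((fun t : ℝ => f ((1 - t) • x₁ + t • x₂)) 1) := by
        simp only [sub_zero, one_smul, zero_smul, add_zero, sub_self, zero_add]
        exact ⟨hfx₁, hfx₂⟩
      obtain ⟨t, htmem, htc⟩ := hiv hmem
      set x₀ : Fin (k+1) → ℝ := (1 - t) • x₁ + t • x₂ with hx₀
      have hx₀S' : x₀ ∈ S' := hseg t htmem
      have hx₀S'' : ∀ i, a i < x₀ i ∧ x₀ i + hs i < b i := hx₀S'
      refine ⟨x₀, fun i => x₀ i + hs i, ?_, ?_, ?_⟩
      · intro i
        refine ⟨(hx₀S'' i).1, ?_, (hx₀S'' i).2⟩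
        show x₀ i < x₀ i + hs i
        linarith [hs_pos i]
      · intro i
        show x₀ i + hs i - x₀ i = (b i - a i) / 3
        simp only [hhs]
        ring
      · have hfx0 : boundaryIntegral ω x₀ (fun i => x₀ i + hs i) = c' := htc
        have hVab : (0:ℝ) < blockVol a b := by
          unfold blockVol
          exact Finset.prod_pos (fun i _ => by linarith [hab i])
        have hV1 : blockVol x₀ (fun i => x₀ i + hs i) = blockVol a b / 3 ^ (k+1) := by
          unfold blockVol
          calc ∏ i, (x₀ i + hs i - x₀ i) = ∏ i : Fin (k+1), (b i - a i) / 3 :=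
                Finset.prod_congr rfl (fun i _ => by simp only [hhs]; ring)
            _ = (∏ i, (b i - a i)) / ∏ _i : Fin (k+1), (3:ℝ) := Finset.prod_div_distrib _ _
            _ = (∏ i, (b i - a i)) / 3 ^ (k+1) := by
                rw [Finset.prod_const]
                norm_num
        rw [hV1, hfx0, hc']
        field_simp
    · -- f < c' on all of S' : contradiction
      exfalso
      push_neg at hQ
      have hle : ∀ j : Fin (k+1) → Fin 3, f (gLo a b j) ≤ c' := by
        intro j
        obtain ⟨hlim, hpath⟩ := hkey j
        refine le_of_tendsto hlim ?_
        filter_upwards [Ioc_mem_nhdsGT_of_mem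
          (by norm_num : (0:ℝ) ∈ Set.Ico (0:ℝ) (1/2))] with t ht
        exact (hQ _ (hpath t ht)).le
      have hltc : f (gLo a b (fun _ => (1 : Fin 3))) < c' := by
        rw [hctrgrid]
        exact hQ _ hctr
      have hs' := Finset.sum_lt_sum (fun j (_ : j ∈ Finset.univ) => hle j)
        ⟨(fun _ => (1 : Fin 3)), Finset.mem_univ _, hltc⟩
      rw [hgrid, hsum3] at hs'
      exact lt_irrefl _ hs'
  · -- c' < f on all of S' : contradiction
    exfalso
    push_neg at hP
    have hge : ∀ j : Fin (k+1) → Fin 3, c' ≤ f (gLo a b j) := by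
      intro j
      obtain ⟨hlim, hpath⟩ := hkey j
      refine ge_of_tendsto hlim ?_
      filter_upwards [Ioc_mem_nhdsGT_of_mem
        (by norm_num : (0:ℝ) ∈ Set.Ico (0:ℝ) (1/2))] with t ht
      exact (hP _ (hpath t ht)).le
    have hgtc : c' < f (gLo a b (fun _ => (1 : Fin 3))) := by
      rw [hctrgrid]
      exact hP _ hctr
    have hs' := Finset.sum_lt_sum (fun j (_ : j ∈ Finset.univ) => hge j)
      ⟨(fun _ => (1 : Fin 3)), Finset.mem_univ _, hgtc⟩
    rw [hgrid, hsum3] at hs'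
    exact lt_irrefl _ hs'


end
end

section
/- Let f : [a,b] → ℝ be a continuous function with a < b. Then there exists a subinterval [a', b'] with a < a' < b' < b such that b' − a' = (b − a)/3 and (f(b') − f(a'))/(b' − a') = (f(b) − f(a))/(b − a). -/
lemma ivt_zero_open {g : ℝ → ℝ} {u v : ℝ} (huv : u ≤ v)
    (hc : ContinuousOn g (Set.Icc u v)) (h1 : g u < 0) (h2 : 0 < g v) :
    ∃ t ∈ Set.Ioo u v, g t = 0 := by
  obtain ⟨t, ht, hgt⟩ := intermediate_value_Icc huv hc
    (Set.mem_Icc.mpr ⟨le_of_lt h1, le_of_lt h2⟩)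
  refine ⟨t, ⟨lt_of_le_of_ne ht.1 ?_, lt_of_le_of_ne ht.2 ?_⟩, hgt⟩
  · intro e; rw [e] at h1; linarith
  · intro e; rw [e] at hgt; linarith

lemma ivt_zero_open' {g : ℝ → ℝ} {u v : ℝ} (huv : u ≤ v)
    (hc : ContinuousOn g (Set.Icc u v)) (h1 : 0 < g u) (h2 : g v < 0) :
    ∃ t ∈ Set.Ioo u v, g t = 0 := by
  obtain ⟨t, ht, hgt⟩ := intermediate_value_Icc' huv hc
    (Set.mem_Icc.mpr ⟨le_of_lt h2, le_of_lt h1⟩)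
  refine ⟨t, ⟨lt_of_le_of_ne ht.1 ?_, lt_of_le_of_ne ht.2 ?_⟩, hgt⟩
  · intro e; rw [e] at h1; linarith
  · intro e; rw [e] at hgt; linarith

/-- **Trisection Lemma.** If `f : [a,b] → ℝ` is continuous (with `a < b`), then there is a
proper subinterval `[a', b'] ⊂ ]a,b[` whose length is one third of that of `[a,b]` and on
which `f` has the same mean slope as on `[a,b]`. -/
theorem trisection_lemma (a b : ℝ) (hab : a < b) (f : ℝ → ℝ)
    (hf : ContinuousOn f (Set.Icc a b)) :
    ∃ a' b' : ℝ, a < a' ∧ a' < b' ∧ b' < b ∧ b' - a' = (b - a) / 3 ∧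
      (f b' - f a') / (b' - a') = (f b - f a) / (b - a) := by
  set h : ℝ := (b - a) / 3 with hh
  have hpos : 0 < h := by rw [hh]; linarith
  have hb : a + 2 * h + h = b := by rw [hh]; ring
  set g : ℝ → ℝ := fun x => f (x + h) - f x - (f b - f a) / 3 with hg
  have hgc : ContinuousOn g (Set.Icc a (a + 2 * h)) := by
    apply ContinuousOn.sub
    apply ContinuousOn.sub
    · apply hf.comp (continuousOn_id.add continuousOn_const)
      intro x hx
      exact Set.mem_Icc.mpr ⟨by simp; linarith [hx.1], by simp; linarith [hx.2]⟩
    · exact hf.mono (Set.Icc_subset_Icc le_rfl (by linarith))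
    · exact continuousOn_const
  have hsum : g a + g (a + h) + g (a + 2 * h) = 0 := by
    have e1 : a + h + h = a + 2 * h := by ring
    have e2 : a + 2 * h + h = b := hb
    simp only [hg, e1, e2]
    ring
  have key : ∃ t ∈ Set.Ioo a (a + 2 * h), g t = 0 := by
    rcases lt_trichotomy (g (a + h)) 0 with h1 | h1 | h1
    · rcases le_or_gt (g a) 0 with h2 | h2
      · have h3 : 0 < g (a + 2 * h) := by linarith
        obtain ⟨t, ht, hgt⟩ := ivt_zero_open (by linarith : a + h ≤ a + 2 * h)
          (hgc.mono (Set.Icc_subset_Icc (by linarith) le_rfl)) h1 h3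
        exact ⟨t, ⟨by linarith [ht.1], ht.2⟩, hgt⟩
      · obtain ⟨t, ht, hgt⟩ := ivt_zero_open' (by linarith : a ≤ a + h)
          (hgc.mono (Set.Icc_subset_Icc le_rfl (by linarith))) h2 h1
        exact ⟨t, ⟨ht.1, by linarith [ht.2]⟩, hgt⟩
    · exact ⟨a + h, ⟨by linarith, by linarith⟩, h1⟩
    · rcases le_or_gt (g a) 0 with h2 | h2
      · rcases lt_or_eq_of_le h2 with h2' | h2'
        · obtain ⟨t, ht, hgt⟩ := ivt_zero_open (by linarith : a ≤ a + h)
            (hgc.mono (Set.Icc_subset_Icc le_rfl (by linarith))) h2' h1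
          exact ⟨t, ⟨ht.1, by linarith [ht.2]⟩, hgt⟩
        · have h3 : g (a + 2 * h) < 0 := by linarith
          obtain ⟨t, ht, hgt⟩ := ivt_zero_open' (by linarith : a + h ≤ a + 2 * h)
            (hgc.mono (Set.Icc_subset_Icc (by linarith) le_rfl)) h1 h3
          exact ⟨t, ⟨by linarith [ht.1], ht.2⟩, hgt⟩
      · have h3 : g (a + 2 * h) < 0 := by linarith
        obtain ⟨t, ht, hgt⟩ := ivt_zero_open' (by linarith : a + h ≤ a + 2 * h)
          (hgc.mono (Set.Icc_subset_Icc (by linarith) le_rfl)) h1 h3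
        exact ⟨t, ⟨by linarith [ht.1], ht.2⟩, hgt⟩
  obtain ⟨t, ht, hgt⟩ := key
  refine ⟨t, t + h, ht.1, by linarith, by linarith [ht.2], by ring_nf, ?_⟩
  have hft : f (t + h) - f t = (f b - f a) / 3 := by
    have := hgt
    simp only [hg] at this
    linarith
  rw [hft]
  have hba : b - a ≠ 0 := by linarith
  have : t + h - t = (b - a) / 3 := by ring_nf; rw [hh]; ring
  rw [this]
  field_simp
end

section
/- Let U ⊆ ℝ be open, f : U → ℝ a function, x ∈ U, and L ∈ ℝ. Then f is differentiable at x with f'(x) = L if and only if for every ε > 0 there exists δ > 0 such that for every closed interval [a,b] ⊆ U with x ∈ [a,b] and 0 < b − a < δ one has |(f(b) − f(a))/(b − a) − L| < ε. -/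
/-!
If `f` has derivative `L` at `x`, the linearization errors of `f` at the two endpoints of an
interval `[a, b] ∋ x` are at most `ε (x - a)` and `ε (b - x)`, so the increment over `[a, b]`
differs from `(b - a) L` by at most `ε (b - a)`. Conversely, every difference quotient at `x`
is the mean slope over the interval between `x` and the other point, which lies in `U` once
that point is close to `x`.
-/

open Set Topology

section MeanSlope

variable {E : Type*} [NormedAddCommGroup E] [NormedSpace ℝ E] {f : ℝ → E} {L : E} {x : ℝ}

lemma HasDerivAt.exists_norm_sub_sub_smul_le (hf : HasDerivAt f L x) {ε : ℝ} (hε : 0 < ε) :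
    ∃ δ > 0, ∀ a b, x ∈ Icc a b → b - a < δ → ‖f b - f a - (b - a) • L‖ ≤ ε * (b - a) := by
  obtain ⟨δ, hδ, hball⟩ := Metric.eventually_nhds_iff.1 ((hasDerivAt_iff_isLittleO.1 hf).def hε)
  refine ⟨δ, hδ, fun a b ⟨hax, hxb⟩ hab => ?_⟩
  have ha := @hball a (by rw [Real.dist_eq, abs_lt]; constructor <;> linarith)
  have hb := @hball b (by rw [Real.dist_eq, abs_lt]; constructor <;> linarith)
  rw [Real.norm_of_nonpos (sub_nonpos.2 hax)] at ha
  rw [Real.norm_of_nonneg (sub_nonneg.2 hxb)] at hb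
  calc ‖f b - f a - (b - a) • L‖
      = ‖(f b - f x - (b - x) • L) - (f a - f x - (a - x) • L)‖ := by
        congr 1; simp only [sub_smul]; abel
    _ ≤ ‖f b - f x - (b - x) • L‖ + ‖f a - f x - (a - x) • L‖ := norm_sub_le _ _
    _ ≤ ε * (b - x) + ε * -(a - x) := add_le_add hb ha
    _ = ε * (b - a) := by ring

lemma dist_slope_le_of_norm_sub_sub_smul_le {a b ε : ℝ} (hab : a < b)
    (h : ‖f b - f a - (b - a) • L‖ ≤ ε * (b - a)) : dist (slope f a b) L ≤ ε := by
  have hba : 0 < b - a := sub_pos.2 hab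
  refine le_of_mul_le_mul_left ?_ hba
  calc (b - a) * dist (slope f a b) L = ‖(b - a) • (slope f a b - L)‖ := by
        rw [norm_smul, Real.norm_of_nonneg hba.le, dist_eq_norm]
    _ = ‖f b - f a - (b - a) • L‖ := by rw [smul_sub, sub_smul_slope, vsub_eq_sub]
    _ ≤ (b - a) * ε := by rwa [mul_comm]

lemma HasDerivAt.exists_dist_slope_lt (hf : HasDerivAt f L x) {ε : ℝ} (hε : 0 < ε) :
    ∃ δ > 0, ∀ a b, x ∈ Icc a b → a < b → b - a < δ → dist (slope f a b) L < ε := by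
  obtain ⟨δ, hδ, hf⟩ := hf.exists_norm_sub_sub_smul_le (half_pos hε)
  exact ⟨δ, hδ, fun a b hx hab hδ =>
    (dist_slope_le_of_norm_sub_sub_smul_le hab (hf a b hx hδ)).trans_lt (half_lt_self hε)⟩

lemma slope_min_max (f : ℝ → E) (x y : ℝ) : slope f (min x y) (max x y) = slope f x y := by
  rcases le_total x y with h | h
  · rw [min_eq_left h, max_eq_right h]
  · rw [min_eq_right h, max_eq_left h, slope_comm]

lemma hasDerivAt_of_forall_dist_slope_lt {U : Set ℝ} (hU : U ∈ 𝓝 x)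
    (h : ∀ ε > 0, ∃ δ > 0, ∀ a b, Icc a b ⊆ U → x ∈ Icc a b → a < b → b - a < δ →
      dist (slope f a b) L < ε) :
    HasDerivAt f L x := by
  rw [hasDerivAt_iff_tendsto_slope, Metric.tendsto_nhdsWithin_nhds]
  intro ε hε
  obtain ⟨δ, hδ, hslope⟩ := h ε hε
  obtain ⟨r, hr, hrU⟩ := Metric.mem_nhds_iff.1 hU
  refine ⟨min δ r, lt_min hδ hr, fun y (hyx : y ≠ x) hy => ?_⟩
  rw [Real.dist_eq, lt_min_iff] at hy
  have hlen : max x y - min x y = |y - x| := by rw [max_sub_min_eq_abs', abs_sub_comm]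
  rw [← slope_min_max]
  refine hslope _ _ ?_ ⟨min_le_left x y, le_max_left x y⟩ (min_lt_max.2 hyx.symm) (hlen ▸ hy.1)
  refine (OrdConnected.uIcc_subset ?_ (Metric.mem_ball_self hr) ?_).trans hrU
  · rw [Real.ball_eq_Ioo]; exact ordConnected_Ioo
  · rw [Metric.mem_ball, Real.dist_eq]; exact hy.2

end MeanSlope

/-- A real function `f` on an open set `U ⊆ ℝ` is differentiable at `x ∈ U` with derivative
`L` if and only if the mean slopes of `f` over small closed intervals of `U` containing `x`
converge to `L`. -/
theorem hasDerivAt_iff_mean_slope (U : Set ℝ) (hU : IsOpen U) (f : ℝ → ℝ) (x : ℝ)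
    (hx : x ∈ U) (L : ℝ) :
    HasDerivAt f L x ↔
      ∀ ε > (0 : ℝ), ∃ δ > (0 : ℝ), ∀ a b : ℝ, Set.Icc a b ⊆ U → x ∈ Set.Icc a b →
        0 < b - a → b - a < δ → |(f b - f a) / (b - a) - L| < ε := by
  simp only [← slope_def_field, ← Real.dist_eq, sub_pos]
  refine ⟨fun hf ε hε => ?_, hasDerivAt_of_forall_dist_slope_lt (hU.mem_nhds hx)⟩
  obtain ⟨δ, hδ, hslope⟩ := hf.exists_dist_slope_lt hε
  exact ⟨δ, hδ, fun a b _ => hslope a b⟩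
end

section
/- Let R ⊂ ℝ² be a closed rectangle, i.e., R = E(B) where B = [a₁,b₁]×[a₂,b₂] is a 2-block and E : ℝ² → ℝ² is a rigid motion (a rotation composed with a translation). Let P, Q : R → ℝ be continuous on R and differentiable at every point of the interior of R, and suppose the function ∂Q/∂x − ∂P/∂y is Riemann integrable on R. Then ∫_{∂R} (P dx + Q dy) = ∫_R (∂Q/∂x − ∂P/∂y) dx dy, where the boundary integral is the integral of the 1-form P dx + Q dy over the boundary 1-chain ∂c of the singular 2-block c = E ∘ ι, ι : B ↪ ℝ² the inclusion. -/
open scoped BigOperators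
open BoxIntegral Set

noncomputable section

/-- The rigid motion of `ℝ²` given by rotation by the angle `θ` followed by translation
by `w`. -/
def rigidMotion (θ : ℝ) (w : Fin 2 → ℝ) : (Fin 2 → ℝ) → (Fin 2 → ℝ) :=
  fun v => ![Real.cos θ * v 0 - Real.sin θ * v 1 + w 0,
             Real.sin θ * v 0 + Real.cos θ * v 1 + w 1]

/-- The constant coordinate `1`-forms `dx` and `dy` on `ℝ²`. -/
def dx2 : AlternatingMap ℝ (Fin 2 → ℝ) ℝ (Fin 1) :=
  AlternatingMap.ofSubsingleton ℝ (Fin 2 → ℝ) ℝ (0 : Fin 1) (LinearMap.proj 0)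

def dy2 : AlternatingMap ℝ (Fin 2 → ℝ) ℝ (Fin 1) :=
  AlternatingMap.ofSubsingleton ℝ (Fin 2 → ℝ) ℝ (0 : Fin 1) (LinearMap.proj 1)


section GreenAuxSection
open Filter MeasureTheory Metric
open scoped Topology

namespace GreenAux


lemma icc_eq_closure {n : ℕ} (I : Box (Fin n)) : Box.Icc I = closure (I : Set (Fin n → ℝ)) := by
  rw [Box.coe_eq_pi, closure_pi_set, Box.Icc_eq_pi]
  refine Set.pi_congr rfl fun i _ => ?_
  exact (closure_Ioc (I.lower_lt_upper i).ne).symm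

lemma exists_bound {n : ℕ} {I : Box (Fin n)} {f : (Fin n → ℝ) → ℝ}
    (h : Integrable I IntegrationParams.Riemann f BoxAdditiveMap.volume) :
    ∃ M : ℝ, ∀ x ∈ Box.Icc I, |f x| ≤ M := by
  classical
  set r : (Fin n → ℝ) → Ioi (0:ℝ) := h.convergenceR 1 0 with hr
  have hrc : ∀ x, r x = r 0 := h.convergenceR_cond 1 0 rfl
  set δ : ℝ := (r 0 : ℝ) with hδ
  have hδ0 : 0 < δ := (r 0).2
  obtain ⟨π, hπp, hπH, hπr, -, -⟩ :=
    Box.exists_taggedPartition_isHenstock_isSubordinate_homothetic I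
      (fun _ => ⟨δ / 2, half_pos hδ0⟩)
  -- any retagging of π is in the base set
  have key : ∀ π' : TaggedPrepartition I, π'.toPrepartition = π.toPrepartition →
      π'.IsHenstock →
      dist (integralSum f BoxAdditiveMap.volume π')
        (integral I IntegrationParams.Riemann f BoxAdditiveMap.volume) ≤ 1 := by
    intro π' hpre hH
    refine h.dist_integralSum_integral_le_of_memBaseSet (c := 0) one_pos ?_ ?_
    · refine ⟨?_, fun _ => hH, fun hD => by simp [IntegrationParams.Riemann] at hD,
        fun hD => by simp [IntegrationParams.Riemann] at hD⟩
      intro J hJ y hy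
      have hJπ : J ∈ π := by
        change J ∈ π'.toPrepartition at hJ
        rwa [hpre] at hJ
      have h1 : dist y (π.tag J) ≤ δ / 2 := hπr J hJπ hy
      have h2 : dist (π'.tag J) (π.tag J) ≤ δ / 2 := hπr J hJπ (hH J hJ)
      refine Metric.mem_closedBall.2 ?_
      rw [← hr, hrc (π'.tag J), ← hδ]
      calc dist y (π'.tag J) ≤ dist y (π.tag J) + dist (π.tag J) (π'.tag J) :=
            dist_triangle _ _ _
        _ ≤ δ / 2 + δ / 2 := add_le_add h1 (dist_comm (π.tag J) (π'.tag J) ▸ h2)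
        _ = δ := by ring
    · change π'.toPrepartition.IsPartition
      rw [hpre]; exact hπp
  -- bound
  set M : ℝ := ∑ J ∈ π.boxes, (|f (π.tag J)| + 2 / ∏ i, ((J : Box (Fin n)).upper i - J.lower i))
    with hM
  refine ⟨M, fun x hx => ?_⟩
  -- find a box of π containing x
  have hcover : Box.Icc I ⊆ ⋃ J ∈ π.boxes, Box.Icc J := by
    rw [icc_eq_closure]
    refine closure_minimal ?_ (isClosed_biUnion_finset fun J _ => isClosed_Icc)
    intro y hy
    have hy' : y ∈ π.toPrepartition.iUnion := by rw [hπp.iUnion_eq]; exact hy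
    rcases (π.toPrepartition.mem_iUnion).1 hy' with ⟨J, hJ, hyJ⟩
    exact Set.mem_iUnion₂.2 ⟨J, hJ, Box.coe_subset_Icc hyJ⟩
  rcases Set.mem_iUnion₂.1 (hcover hx) with ⟨J₀, hJ₀, hxJ₀⟩
  set t : Box (Fin n) → (Fin n → ℝ) := fun J => if J = J₀ then x else π.tag J with ht
  have htmem : ∀ J, t J ∈ Box.Icc I := by
    intro J
    simp only [ht]
    split_ifs
    · exact hx
    · exact π.tag_mem_Icc J
  set π' : TaggedPrepartition I := ⟨π.toPrepartition, t, htmem⟩ with hπ'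
  have hH' : π'.IsHenstock := by
    intro J hJ
    show t J ∈ Box.Icc J
    simp only [ht]
    split_ifs with hc
    · exact hc ▸ hxJ₀
    · exact hπH J hJ
  have d1 := key π' rfl hH'
  have d2 : dist (integral I IntegrationParams.Riemann f BoxAdditiveMap.volume)
      (integralSum f BoxAdditiveMap.volume π) ≤ 1 := by
    rw [dist_comm]; exact key π rfl hπH
  have hdist : dist (integralSum f BoxAdditiveMap.volume π')
      (integralSum f BoxAdditiveMap.volume π) ≤ 2 := by
    calc dist (integralSum f BoxAdditiveMap.volume π') (integralSum f BoxAdditiveMap.volume π)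
        ≤ dist (integralSum f BoxAdditiveMap.volume π')
            (integral I IntegrationParams.Riemann f BoxAdditiveMap.volume)
          + dist (integral I IntegrationParams.Riemann f BoxAdditiveMap.volume)
            (integralSum f BoxAdditiveMap.volume π) := dist_triangle _ _ _
      _ ≤ 1 + 1 := add_le_add d1 d2
      _ = 2 := by norm_num
  -- compute the difference of the two sums
  set v : ℝ := ∏ i, (J₀.upper i - J₀.lower i) with hv
  have hv0 : 0 < v := Finset.prod_pos fun i _ => sub_pos.2 (J₀.lower_lt_upper i)
  have hsum : integralSum f BoxAdditiveMap.volume π' - integralSum f BoxAdditiveMap.volume π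
      = v • f x - v • f (π.tag J₀) := by
    rw [integralSum, integralSum, ← Finset.sum_sub_distrib]
    have hz : ∀ J ∈ π.boxes, J ≠ J₀ →
        (BoxAdditiveMap.volume J (f (π'.tag J)) - BoxAdditiveMap.volume J (f (π.tag J)) : ℝ)
          = 0 := by
      intro J _ hne
      have : π'.tag J = π.tag J := by show t J = _; simp [ht, hne]
      rw [this, sub_self]
    rw [Finset.sum_eq_single J₀ hz (fun hJ => absurd hJ₀ hJ)]
    have htag : π'.tag J₀ = x := by show t J₀ = x; simp [ht]
    rw [htag, BoxAdditiveMap.volume_apply, BoxAdditiveMap.volume_apply, ← hv]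
  have habs : |v • f x - v • f (π.tag J₀)| ≤ 2 := by
    calc |v • f x - v • f (π.tag J₀)|
        = dist (integralSum f BoxAdditiveMap.volume π') (integralSum f BoxAdditiveMap.volume π) :=
          by rw [Real.dist_eq, hsum]
      _ ≤ 2 := hdist
  have hfx : |f x| ≤ |f (π.tag J₀)| + 2 / v := by
    have h1 : v * |f x - f (π.tag J₀)| ≤ 2 := by
      rw [← abs_of_pos hv0, ← abs_mul]
      have : v * (f x - f (π.tag J₀)) = v • f x - v • f (π.tag J₀) := by
        simp [smul_eq_mul]; ring
      rw [this]; exact habs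
    have h2 : |f x - f (π.tag J₀)| ≤ 2 / v := by
      rw [le_div_iff₀ hv0]
      calc |f x - f (π.tag J₀)| * v = v * |f x - f (π.tag J₀)| := mul_comm _ _
        _ ≤ 2 := h1
    calc |f x| = |f (π.tag J₀) + (f x - f (π.tag J₀))| := by ring_nf
      _ ≤ |f (π.tag J₀)| + |f x - f (π.tag J₀)| := abs_add_le _ _
      _ ≤ |f (π.tag J₀)| + 2 / v := by linarith
  refine hfx.trans ?_
  rw [hM]
  refine Finset.single_le_sum
    (f := fun J => |f (π.tag J)| + 2 / ∏ i, ((J : Box (Fin n)).upper i - J.lower i)) ?_ hJ₀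
  intro J _
  have hp : (0:ℝ) < ∏ i, ((J : Box (Fin n)).upper i - J.lower i) :=
    Finset.prod_pos fun i _ => sub_pos.2 (J.lower_lt_upper i)
  positivity


lemma integral_sub_le {n : ℕ} {I J : Box (Fin n)} (hJ : J ≤ I) {f : (Fin n → ℝ) → ℝ}
    (h : Integrable I IntegrationParams.Riemann f BoxAdditiveMap.volume)
    {M : ℝ} (hMb : ∀ x ∈ Box.Icc I, |f x| ≤ M) :
    |integral I IntegrationParams.Riemann f BoxAdditiveMap.volume
      - integral J IntegrationParams.Riemann f BoxAdditiveMap.volume|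
      ≤ M * ((volume : Measure (Fin n → ℝ)).toBoxAdditive I
          - (volume : Measure (Fin n → ℝ)).toBoxAdditive J) := by
  classical
  set μBA := (volume : Measure (Fin n → ℝ)).toBoxAdditive with hμ
  set π₁ : Prepartition I := Prepartition.single I J hJ with hπ₁
  set π₂ : Prepartition I := π₁.compl with hπ₂
  have hcompl : π₂.iUnion = ↑I \ π₁.iUnion := π₁.iUnion_compl
  have hdisj : Disjoint π₁.iUnion π₂.iUnion := hcompl.symm ▸ disjoint_sdiff_self_right
  have hpart : (π₁.disjUnion π₂ hdisj).IsPartition := by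
    refine Prepartition.isPartitionDisjUnionOfEqDiff hcompl
  -- additivity of the integral
  have hIsum := h.toBoxAdditive.sum_partition_boxes le_rfl hpart
  have hμsum := μBA.sum_partition_boxes (le_top : (I : WithTop (Box (Fin n))) ≤ ⊤) hpart
  rw [Prepartition.disjUnion_boxes, Prepartition.sum_disj_union_boxes hdisj] at hIsum
  rw [Prepartition.disjUnion_boxes, Prepartition.sum_disj_union_boxes hdisj] at hμsum
  have h1sum : ∀ g : Box (Fin n) → ℝ, ∑ K ∈ π₁.boxes, g K = g J := by
    intro g
    have hb : π₁.boxes = {J} := rfl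
    rw [hb, Finset.sum_singleton]
  rw [h1sum] at hIsum hμsum
  have hJint : ∀ K ∈ π₂.boxes, K ≤ I := fun K hK => π₂.le_of_mem hK
  have hIsum' : integral J IntegrationParams.Riemann f BoxAdditiveMap.volume
      + ∑ K ∈ π₂.boxes, integral K IntegrationParams.Riemann f BoxAdditiveMap.volume
      = integral I IntegrationParams.Riemann f BoxAdditiveMap.volume := hIsum
  have hIeq : integral I IntegrationParams.Riemann f BoxAdditiveMap.volume
      - integral J IntegrationParams.Riemann f BoxAdditiveMap.volume
      = ∑ K ∈ π₂.boxes, integral K IntegrationParams.Riemann f BoxAdditiveMap.volume := by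
    linarith
  rw [hIeq]
  have hμeq : μBA I - μBA J = ∑ K ∈ π₂.boxes, μBA K := by rw [← hμsum]; ring
  rw [hμeq, Finset.mul_sum]
  calc |∑ K ∈ π₂.boxes, integral K IntegrationParams.Riemann f BoxAdditiveMap.volume|
      ≤ ∑ K ∈ π₂.boxes, |integral K IntegrationParams.Riemann f BoxAdditiveMap.volume| :=
        Finset.abs_sum_le_sum_abs _ _
    _ ≤ ∑ K ∈ π₂.boxes, M * μBA K := by
        refine Finset.sum_le_sum fun K hK => ?_
        have hb : ∀ x ∈ Box.Icc K, ‖f x‖ ≤ M := fun x hx =>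
          hMb x (Box.le_iff_Icc.1 (hJint K hK) hx)
        have := BoxIntegral.norm_integral_le_of_le_const
          (l := IntegrationParams.Riemann) (I := K) (f := f) hb volume
        rw [Real.norm_eq_abs] at this
        calc |integral K IntegrationParams.Riemann f BoxAdditiveMap.volume|
            ≤ (volume (K : Set (Fin n → ℝ))).toReal * M := this
          _ = M * μBA K := by rw [hμ, Measure.toBoxAdditive_apply, mul_comm]; rfl

lemma tendsto_integral_subbox {n : ℕ} {I : Box (Fin n)} {f : (Fin n → ℝ) → ℝ}
    (h : Integrable I IntegrationParams.Riemann f BoxAdditiveMap.volume)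
    (J : ℕ →o Box (Fin n)) (hle : ∀ k, J k ≤ I)
    (hl : Tendsto (fun k => (J k).lower) atTop (𝓝 I.lower))
    (hu : Tendsto (fun k => (J k).upper) atTop (𝓝 I.upper)) :
    Tendsto (fun k => integral (J k) IntegrationParams.Riemann f BoxAdditiveMap.volume) atTop
      (𝓝 (integral I IntegrationParams.Riemann f BoxAdditiveMap.volume)) := by
  obtain ⟨M, hM⟩ := exists_bound h
  set μBA := (volume : Measure (Fin n → ℝ)).toBoxAdditive with hμ
  have hvol : Tendsto (fun k => μBA (J k)) atTop (𝓝 (μBA I)) := by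
    have hva : ∀ K : Box (Fin n), μBA K = ∏ i, (K.upper i - K.lower i) := fun K =>
      K.volume_apply
    simp only [hva]
    exact tendsto_finset_prod _ fun i _ =>
      ((tendsto_pi_nhds.1 hu i).sub (tendsto_pi_nhds.1 hl i))
  rw [tendsto_iff_dist_tendsto_zero]
  have hd : ∀ k, dist (integral (J k) IntegrationParams.Riemann f BoxAdditiveMap.volume)
      (integral I IntegrationParams.Riemann f BoxAdditiveMap.volume)
      ≤ M * (μBA I - μBA (J k)) := fun k => by
    rw [dist_comm, Real.dist_eq]; exact integral_sub_le (hle k) h hM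
  have h0 : Tendsto (fun k => M * (μBA I - μBA (J k))) atTop (𝓝 0) := by
    have h1 := (tendsto_const_nhds (x := μBA I) (f := atTop (α := ℕ))).sub hvol
    have h2 := h1.const_mul M
    simpa using h2
  exact squeeze_zero (fun k => dist_nonneg) hd h0



lemma riemann_eq_setIntegral {n : ℕ} {I : Box (Fin n)} {f : (Fin n → ℝ) → ℝ}
    (hc : ContinuousOn f (Box.Icc I)) :
    integral I IntegrationParams.Riemann f BoxAdditiveMap.volume = ∫ x in Box.Icc I, f x := by
  have hInt : IntegrableOn f (Box.Icc I) volume :=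
    hc.integrableOn_compact I.isCompact_Icc
  have hBox : HasIntegral I IntegrationParams.Henstock f
      ((volume : Measure (Fin n → ℝ)).toBoxAdditive.toSMul) (∫ x in (I : Set (Fin n → ℝ)), f x) :=
    (hInt.mono_set Box.coe_subset_Icc).hasBoxIntegral IntegrationParams.Henstock rfl
  have hR : HasIntegral I IntegrationParams.Riemann f BoxAdditiveMap.volume
      (integral I IntegrationParams.Riemann f BoxAdditiveMap.volume) :=
    (integrable_of_continuousOn (l := IntegrationParams.Riemann) hc volume).hasIntegral
  have heq := (hR.mono IntegrationParams.henstock_le_riemann).unique hBox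
  rw [heq, setIntegral_congr_set (Box.coe_ae_eq_Icc I)]

lemma gp_eq_setIntegral {n : ℕ} {I : Box (Fin n)} {f : (Fin n → ℝ) → ℝ}
    (hc : ContinuousOn f (Box.Icc I)) :
    integral I IntegrationParams.GP f BoxAdditiveMap.volume = ∫ x in Box.Icc I, f x := by
  have hInt : IntegrableOn f (Box.Icc I) volume :=
    hc.integrableOn_compact I.isCompact_Icc
  have hBox : HasIntegral I IntegrationParams.GP f
      ((volume : Measure (Fin n → ℝ)).toBoxAdditive.toSMul) (∫ x in (I : Set (Fin n → ℝ)), f x) :=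
    (hInt.mono_set Box.coe_subset_Icc).hasBoxIntegral IntegrationParams.GP rfl
  show integral I IntegrationParams.GP f ((volume : Measure (Fin n → ℝ)).toBoxAdditive.toSMul)
      = _
  rw [hBox.integral_eq, setIntegral_congr_set (Box.coe_ae_eq_Icc I)]


lemma divergence_riemann {n : ℕ} (I : Box (Fin (n+1)))
    (f : (Fin (n+1) → ℝ) → (Fin (n+1) → ℝ))
    (f' : (Fin (n+1) → ℝ) → ((Fin (n+1) → ℝ) →L[ℝ] (Fin (n+1) → ℝ)))
    (Hc : ContinuousOn f (Box.Icc I))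
    (Hd : ∀ x ∈ Box.Ioo I, HasFDerivAt f (f' x) x)
    (Hi : Integrable I IntegrationParams.Riemann (fun x => ∑ i, f' x (Pi.single i 1) i)
      BoxAdditiveMap.volume) :
    integral I IntegrationParams.Riemann (fun x => ∑ i, f' x (Pi.single i 1) i)
        BoxAdditiveMap.volume
      = ∑ i : Fin (n+1),
          ((∫ x in Box.Icc (I.face i), f (i.insertNth (I.upper i) x) i)
            - ∫ x in Box.Icc (I.face i), f (i.insertNth (I.lower i) x) i) := by
  rcases I.exists_seq_mono_tendsto with ⟨J, hJ_sub, hJl, hJu⟩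
  have hJ_sub' : ∀ k, Box.Icc (J k) ⊆ Box.Icc I := fun k => (hJ_sub k).trans I.Ioo_subset_Icc
  have hJ_le : ∀ k, J k ≤ I := fun k => Box.le_iff_Icc.2 (hJ_sub' k)
  have HcJ : ∀ k, ContinuousOn f (Box.Icc (J k)) := fun k => Hc.mono (hJ_sub' k)
  have HJ_eq : ∀ k, integral (J k) IntegrationParams.Riemann
      (fun x => ∑ i, f' x (Pi.single i 1) i) BoxAdditiveMap.volume
      = ∑ i : Fin (n+1), ((∫ x in Box.Icc ((J k).face i), f (i.insertNth ((J k).upper i) x) i)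
          - ∫ x in Box.Icc ((J k).face i), f (i.insertNth ((J k).lower i) x) i) := by
    intro k
    have A := hasIntegral_GP_divergence_of_forall_hasDerivWithinAt (J k) f f' ∅ countable_empty
      (fun x hx => absurd hx (Set.notMem_empty x))
      (fun x hx => (Hd x (hJ_sub k hx.1)).hasFDerivWithinAt)
    have B : HasIntegral (J k) IntegrationParams.GP
        (fun x => ∑ i, f' x (Pi.single i 1) i) BoxAdditiveMap.volume
        (integral (J k) IntegrationParams.Riemann (fun x => ∑ i, f' x (Pi.single i 1) i)
          BoxAdditiveMap.volume) :=
      ((Hi.to_subbox (hJ_le k)).hasIntegral).mono IntegrationParams.gp_le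
    rw [B.unique A]
    refine Finset.sum_congr rfl fun i _ => ?_
    have hui : (J k).upper i ∈ Icc ((J k).lower i) ((J k).upper i) :=
      Set.right_mem_Icc.2 ((J k).lower_le_upper i)
    have hli : (J k).lower i ∈ Icc ((J k).lower i) ((J k).upper i) :=
      Set.left_mem_Icc.2 ((J k).lower_le_upper i)
    rw [gp_eq_setIntegral (f := fun x => f (i.insertNth ((J k).upper i) x) i)
        (Box.continuousOn_face_Icc ((continuous_apply i).comp_continuousOn (HcJ k)) hui),
      gp_eq_setIntegral (f := fun x => f (i.insertNth ((J k).lower i) x) i)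
        (Box.continuousOn_face_Icc ((continuous_apply i).comp_continuousOn (HcJ k)) hli)]
  have hLHS := tendsto_integral_subbox Hi J hJ_le hJl hJu
  -- limit of the face integrals
  rw [tendsto_pi_nhds] at hJl hJu
  have hface : Tendsto (fun k => ∑ i : Fin (n+1),
      ((∫ x in Box.Icc ((J k).face i), f (i.insertNth ((J k).upper i) x) i)
        - ∫ x in Box.Icc ((J k).face i), f (i.insertNth ((J k).lower i) x) i)) atTop
      (𝓝 (∑ i : Fin (n+1), ((∫ x in Box.Icc (I.face i), f (i.insertNth (I.upper i) x) i)
        - ∫ x in Box.Icc (I.face i), f (i.insertNth (I.lower i) x) i))) := by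
    suffices H : ∀ (i : Fin (n + 1)) (c : ℕ → ℝ) (d), (∀ k, c k ∈ Icc (I.lower i) (I.upper i)) →
        Tendsto c atTop (𝓝 d) →
        Tendsto (fun k => ∫ x in Box.Icc ((J k).face i), f (i.insertNth (c k) x) i) atTop
          (𝓝 <| ∫ x in Box.Icc (I.face i), f (i.insertNth d x) i) by
      rw [Box.Icc_eq_pi] at hJ_sub'
      refine tendsto_finset_sum _ fun i _ => (H _ _ _ ?_ (hJu _)).sub (H _ _ _ ?_ (hJl _))
      exacts [fun k => hJ_sub' k (J k).upper_mem_Icc _ trivial, fun k =>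
        hJ_sub' k (J k).lower_mem_Icc _ trivial]
    intro i c d hc hcd
    have hd : d ∈ Icc (I.lower i) (I.upper i) :=
      isClosed_Icc.mem_of_tendsto hcd (Eventually.of_forall hc)
    have Hic : ∀ k, IntegrableOn (fun x => f (i.insertNth (c k) x) i) (Box.Icc (I.face i)) :=
      fun k => (Box.continuousOn_face_Icc ((continuous_apply i).comp_continuousOn Hc)
        (hc k)).integrableOn_Icc
    have Hid : IntegrableOn (fun x => f (i.insertNth d x) i) (Box.Icc (I.face i)) :=
      (Box.continuousOn_face_Icc ((continuous_apply i).comp_continuousOn Hc) hd).integrableOn_Icc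
    have H :
        Tendsto (fun k => ∫ x in Box.Icc ((J k).face i), f (i.insertNth d x) i) atTop
          (𝓝 <| ∫ x in Box.Icc (I.face i), f (i.insertNth d x) i) := by
      have hIoo : (⋃ k, Box.Ioo ((J k).face i)) = Box.Ioo (I.face i) :=
        Box.iUnion_Ioo_of_tendsto ((Box.monotone_face i).comp J.monotone)
          (tendsto_pi_nhds.2 fun _ => hJl _) (tendsto_pi_nhds.2 fun _ => hJu _)
      simp only [IntegrableOn, ← Measure.restrict_congr_set (Box.Ioo_ae_eq_Icc _), ← hIoo]
        at Hid ⊢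
      exact tendsto_setIntegral_of_monotone (fun k => ((J k).face i).measurableSet_Ioo)
        (Box.Ioo.monotone.comp ((Box.monotone_face i).comp J.monotone)) Hid
    refine H.congr_dist (Metric.nhds_basis_closedBall.tendsto_right_iff.2 fun ε εpos => ?_)
    have hvol_pos : ∀ J : Box (Fin n), 0 < ∏ j, (J.upper j - J.lower j) := fun J =>
      Finset.prod_pos fun j _ => sub_pos.2 <| J.lower_lt_upper _
    rcases Metric.uniformContinuousOn_iff_le.1
        (I.isCompact_Icc.uniformContinuousOn_of_continuous Hc)
        (ε / ∏ j, ((I.face i).upper j - (I.face i).lower j))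
        (div_pos εpos (hvol_pos (I.face i))) with ⟨δ, δpos, hδ⟩
    refine (hcd.eventually (Metric.ball_mem_nhds _ δpos)).mono fun k hk => ?_
    have Hsub : Box.Icc ((J k).face i) ⊆ Box.Icc (I.face i) :=
      Box.le_iff_Icc.1 (Box.face_mono (hJ_le _) i)
    rw [mem_closedBall_zero_iff, Real.norm_eq_abs, abs_of_nonneg dist_nonneg, dist_eq_norm,
      ← MeasureTheory.integral_sub (Hid.mono_set Hsub) ((Hic _).mono_set Hsub)]
    calc
      ‖∫ x in Box.Icc ((J k).face i), f (i.insertNth d x) i - f (i.insertNth (c k) x) i‖ ≤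
          (ε / ∏ j, ((I.face i).upper j - (I.face i).lower j)) *
            (volume (Box.Icc ((J k).face i))).toReal := by
        refine norm_setIntegral_le_of_norm_le_const (((J k).face i).measure_Icc_lt_top _)
          fun x hx => ?_
        rw [← dist_eq_norm]
        calc
          dist (f (i.insertNth d x) i) (f (i.insertNth (c k) x) i) ≤
              dist (f (i.insertNth d x)) (f (i.insertNth (c k) x)) :=
            dist_le_pi_dist (f (i.insertNth d x)) (f (i.insertNth (c k) x)) i
          _ ≤ ε / ∏ j, ((I.face i).upper j - (I.face i).lower j) :=
            hδ _ (I.mapsTo_insertNth_face_Icc hd <| Hsub hx) _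
              (I.mapsTo_insertNth_face_Icc (hc _) <| Hsub hx) ?_
        rw [Fin.dist_insertNth_insertNth, dist_self, dist_comm]
        exact max_le hk.le δpos.lt.le
      _ ≤ ε := by
        rw [Box.Icc_def, Real.volume_Icc_pi_toReal ((J k).face i).lower_le_upper,
          ← le_div_iff₀ (hvol_pos _)]
        gcongr
        exacts [hvol_pos _, fun _ _ ↦ sub_nonneg.2 (Box.lower_le_upper _ _),
          (hJ_sub' _ (J _).upper_mem_Icc).2 _, (hJ_sub' _ (J _).lower_mem_Icc).1 _]
  exact tendsto_nhds_unique hLHS (hface.congr fun k => (HJ_eq k).symm)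


def rotL (θ : ℝ) : (Fin 2 → ℝ) →L[ℝ] (Fin 2 → ℝ) :=
  ContinuousLinearMap.pi
    ![Real.cos θ • ContinuousLinearMap.proj 0 - Real.sin θ • ContinuousLinearMap.proj 1,
      Real.sin θ • ContinuousLinearMap.proj 0 + Real.cos θ • ContinuousLinearMap.proj 1]

lemma rotL_apply (θ : ℝ) (v : Fin 2 → ℝ) :
    rotL θ v = ![Real.cos θ * v 0 - Real.sin θ * v 1,
                 Real.sin θ * v 0 + Real.cos θ * v 1] := by
  funext i
  fin_cases i <;>
    simp [rotL, ContinuousLinearMap.pi_apply, smul_eq_mul]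

lemma rotL_single0 (θ : ℝ) :
    rotL θ (Pi.single (0 : Fin 2) 1) = ![Real.cos θ, Real.sin θ] := by
  rw [rotL_apply]
  norm_num

lemma rotL_single1 (θ : ℝ) :
    rotL θ (Pi.single (1 : Fin 2) 1) = ![-Real.sin θ, Real.cos θ] := by
  rw [rotL_apply]
  norm_num

lemma rigidMotion_eq (θ : ℝ) (w : Fin 2 → ℝ) :
    rigidMotion θ w = fun v => rotL θ v + w := by
  funext v i
  fin_cases i <;> simp [rigidMotion, rotL_apply]

lemma hasFDerivAt_rigidMotion (θ : ℝ) (w : Fin 2 → ℝ) (v : Fin 2 → ℝ) :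
    HasFDerivAt (rigidMotion θ w) (rotL θ) v := by
  rw [rigidMotion_eq]
  exact (rotL θ).hasFDerivAt.add_const w

lemma fderiv_rigidMotion (θ : ℝ) (w : Fin 2 → ℝ) (v : Fin 2 → ℝ) :
    fderiv ℝ (rigidMotion θ w) v = rotL θ :=
  (hasFDerivAt_rigidMotion θ w v).fderiv

lemma rotL_inv (θ : ℝ) (v : Fin 2 → ℝ) : rotL (-θ) (rotL θ v) = v := by
  funext i
  fin_cases i <;>
  · simp [rotL_apply, Real.cos_neg, Real.sin_neg]
    first
    | linear_combination (v 0) * Real.sin_sq_add_cos_sq θ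
    | linear_combination (v 1) * Real.sin_sq_add_cos_sq θ

lemma isOpenMap_rigidMotion (θ : ℝ) (w : Fin 2 → ℝ) : IsOpenMap (rigidMotion θ w) := by
  have h1 : Function.LeftInverse (rotL (-θ)) (rotL θ) := rotL_inv θ
  have h2 : Function.LeftInverse (rotL θ) (rotL (-θ)) := fun v => by
    have h := rotL_inv (-θ) v
    rwa [neg_neg] at h
  let eqv : (Fin 2 → ℝ) ≃L[ℝ] (Fin 2 → ℝ) :=
    ContinuousLinearEquiv.equivOfInverse (rotL θ) (rotL (-θ)) h1 h2
  rw [rigidMotion_eq]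
  have : (fun v => rotL θ v + w) = (fun y => y + w) ∘ fun v => eqv v := rfl
  rw [this]
  exact (Homeomorph.addRight w).isOpenMap.comp eqv.toHomeomorph.isOpenMap

lemma continuous_rigidMotion (θ : ℝ) (w : Fin 2 → ℝ) : Continuous (rigidMotion θ w) := by
  rw [rigidMotion_eq]
  exact (rotL θ).continuous.add continuous_const

lemma dx2_apply' (v : Fin 1 → (Fin 2 → ℝ)) : dx2 v = v 0 0 := rfl

lemma dy2_apply' (v : Fin 1 → (Fin 2 → ℝ)) : dy2 v = v 0 1 := rfl

lemma clm_apply_vec (g : (Fin 2 → ℝ) →L[ℝ] ℝ) (x y : ℝ) :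
    g ![x, y] = x * g (e 0) + y * g (e 1) := by
  have h : (![x, y] : Fin 2 → ℝ) = x • (e 0) + y • (e 1) := by
    funext i
    fin_cases i <;> simp [e]
  rw [h, map_add, g.map_smul, g.map_smul, smul_eq_mul, smul_eq_mul]

end GreenAux

end GreenAuxSection

/-- **Green's theorem without the `C¹` assumption.** Let `R = E([a,b])` be a closed
rectangle in `ℝ²`, the image of the `2`-block `[a,b]` under a rigid motion `E`
(a rotation composed with a translation).  Let `P, Q` be continuous on `R` and
differentiable at every point of the interior of `R`, and suppose that
`∂Q/∂x - ∂P/∂y` is Riemann integrable on `R` (i.e. its pullback along `E` is Riemann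
integrable on `[a,b]`).  Then `∫_{∂R} (P dx + Q dy) = ∫_R (∂Q/∂x - ∂P/∂y) dx dy`, where
the boundary integral is the integral of the `1`-form `P dx + Q dy` over the boundary
`1`-chain of the singular `2`-block `c = E ∘ ι`, `ι : [a,b] ↪ ℝ²` the inclusion. -/
theorem green_theorem (θ : ℝ) (w : Fin 2 → ℝ)
    (a b : Fin 2 → ℝ) (hab : ∀ i, a i < b i)
    (R : Set (Fin 2 → ℝ)) (hR : R = rigidMotion θ w '' Set.Icc a b)
    (P Q : (Fin 2 → ℝ) → ℝ)
    (hP : ContinuousOn P R) (hQ : ContinuousOn Q R)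
    (hPd : ∀ x ∈ interior R, DifferentiableAt ℝ P x)
    (hQd : ∀ x ∈ interior R, DifferentiableAt ℝ Q x)
    (hInt : RiemannIntegrableOn
      (fun t => fderiv ℝ Q (rigidMotion θ w t) (e 0)
        - fderiv ℝ P (rigidMotion θ w t) (e 1)) a b) :
    boundaryIntegral
        (pullback (rigidMotion θ w) (fun x => P x • dx2 + Q x • dy2)) a b
      = riemannIntegral
          (fun t => fderiv ℝ Q (rigidMotion θ w t) (e 0)
            - fderiv ℝ P (rigidMotion θ w t) (e 1)) a b := by
  classical
  obtain ⟨hab', hIg⟩ := hInt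
  set E : (Fin 2 → ℝ) → (Fin 2 → ℝ) := rigidMotion θ w with hE
  set g : (Fin 2 → ℝ) → ℝ :=
    fun t => fderiv ℝ Q (E t) (e 0) - fderiv ℝ P (E t) (e 1) with hg
  have hIg' : BoxIntegral.Integrable ⟨a, b, hab⟩ BoxIntegral.IntegrationParams.Riemann g
      BoxIntegral.BoxAdditiveMap.volume := hIg
  set dP : (Fin 2 → ℝ) → ((Fin 2 → ℝ) →L[ℝ] ℝ) :=
    fun t => (fderiv ℝ P (E t)).comp (GreenAux.rotL θ) with hdP
  set dQ : (Fin 2 → ℝ) → ((Fin 2 → ℝ) →L[ℝ] ℝ) :=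
    fun t => (fderiv ℝ Q (E t)).comp (GreenAux.rotL θ) with hdQ
  set u : (Fin 2 → ℝ) → (Fin 2 → ℝ) := fun t =>
    ![ -Real.sin θ * P (E t) + Real.cos θ * Q (E t),
       -(Real.cos θ * P (E t) + Real.sin θ * Q (E t)) ] with hu
  set u' : (Fin 2 → ℝ) → ((Fin 2 → ℝ) →L[ℝ] (Fin 2 → ℝ)) := fun t =>
    ContinuousLinearMap.pi
      ![ (-Real.sin θ) • dP t + Real.cos θ • dQ t,
         -(Real.cos θ • dP t + Real.sin θ • dQ t) ] with hu'
  -- interior points of the box are mapped to the interior of `R`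
  have hIoo : interior (Set.Icc a b) = Box.Ioo (⟨a, b, hab⟩ : Box (Fin 2)) := by
    rw [← Set.pi_univ_Icc, interior_pi_set Set.finite_univ]
    simp only [interior_Icc]
    rfl
  have hintR : ∀ t ∈ Box.Ioo (⟨a, b, hab⟩ : Box (Fin 2)), E t ∈ interior R := by
    intro t ht
    rw [hR]
    exact (GreenAux.isOpenMap_rigidMotion θ w).image_interior_subset _
      ⟨t, hIoo ▸ ht, rfl⟩
  -- continuity
  have hmapsTo : Set.MapsTo E (Set.Icc a b) R := by
    rw [hR]; exact Set.mapsTo_image E _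
  have hPE : ContinuousOn (fun t => P (E t)) (Set.Icc a b) :=
    hP.comp (GreenAux.continuous_rigidMotion θ w).continuousOn hmapsTo
  have hQE : ContinuousOn (fun t => Q (E t)) (Set.Icc a b) :=
    hQ.comp (GreenAux.continuous_rigidMotion θ w).continuousOn hmapsTo
  have Hc : ContinuousOn u (Box.Icc (⟨a, b, hab⟩ : Box (Fin 2))) := by
    have h0 : ContinuousOn (fun t => -Real.sin θ * P (E t) + Real.cos θ * Q (E t))
        (Set.Icc a b) := (continuousOn_const.mul hPE).add (continuousOn_const.mul hQE)
    have h1 : ContinuousOn (fun t => -(Real.cos θ * P (E t) + Real.sin θ * Q (E t)))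
        (Set.Icc a b) := ((continuousOn_const.mul hPE).add (continuousOn_const.mul hQE)).neg
    rw [continuousOn_pi]
    intro i
    fin_cases i
    · exact h0
    · exact h1
  -- differentiability
  have Hd : ∀ t ∈ Box.Ioo (⟨a, b, hab⟩ : Box (Fin 2)), HasFDerivAt u (u' t) t := by
    intro t ht
    have hPt : HasFDerivAt (fun s => P (E s)) (dP t) t :=
      ((hPd _ (hintR t ht)).hasFDerivAt).comp t (GreenAux.hasFDerivAt_rigidMotion θ w t)
    have hQt : HasFDerivAt (fun s => Q (E s)) (dQ t) t :=
      ((hQd _ (hintR t ht)).hasFDerivAt).comp t (GreenAux.hasFDerivAt_rigidMotion θ w t)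
    refine hasFDerivAt_pi'' fun i => ?_
    rw [hu', ContinuousLinearMap.proj_pi]
    fin_cases i
    · exact (hPt.const_mul (-Real.sin θ)).add (hQt.const_mul (Real.cos θ))
    · exact ((hPt.const_mul (Real.cos θ)).add (hQt.const_mul (Real.sin θ))).neg
  -- the divergence of `u'` is `g`
  have hdiv : (fun x => ∑ i : Fin 2, u' x (Pi.single i 1) i) = g := by
    funext t
    simp only [hu', hg, hdP, hdQ, Fin.sum_univ_two, ContinuousLinearMap.pi_apply,
      Matrix.cons_val_zero, Matrix.cons_val_one, Matrix.head_cons,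
      ContinuousLinearMap.add_apply, ContinuousLinearMap.neg_apply,
      ContinuousLinearMap.coe_smul', Pi.smul_apply, ContinuousLinearMap.coe_comp',
      Function.comp_apply, GreenAux.rotL_single0, GreenAux.rotL_single1,
      GreenAux.clm_apply_vec, smul_eq_mul]
    linear_combination
      (fderiv ℝ Q (E t) (e 0) - fderiv ℝ P (E t) (e 1)) * Real.sin_sq_add_cos_sq θ
  -- the divergence theorem
  have hmain := GreenAux.divergence_riemann (n := 1) ⟨a, b, hab⟩ u u' Hc Hd
    (by rw [hdiv]; exact hIg')
  rw [hdiv] at hmain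
  have hmain2 : BoxIntegral.integral (⟨a, b, hab⟩ : Box (Fin 2))
      BoxIntegral.IntegrationParams.Riemann g BoxIntegral.BoxAdditiveMap.volume
      = ∑ i : Fin 2,
          ((∫ x in Box.Icc (Box.face ⟨a, b, hab⟩ i), u (i.insertNth (b i) x) i)
            - ∫ x in Box.Icc (Box.face ⟨a, b, hab⟩ i), u (i.insertNth (a i) x) i) := hmain
  rw [Fin.sum_univ_two] at hmain2
  -- compute the face integrands of the pulled-back form
  have hsa0 : (0 : Fin 2).succAbove (0 : Fin 1) = 1 := rfl
  have hsa1 : (1 : Fin 2).succAbove (0 : Fin 1) = 0 := rfl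
  have hface0 : ∀ c : ℝ, faceFun (pullback E (fun x => P x • dx2 + Q x • dy2)) 0 c
      = fun t => u ((0 : Fin 2).insertNth c t) 0 := by
    intro c
    funext t
    simp only [faceFun, pullback, hE, GreenAux.fderiv_rigidMotion,
      AlternatingMap.compLinearMap_apply, ContinuousLinearMap.coe_coe,
      AlternatingMap.add_apply, AlternatingMap.smul_apply, GreenAux.dx2_apply',
      GreenAux.dy2_apply', smul_eq_mul,
      hsa0, e, hu]
    rw [GreenAux.fderiv_rigidMotion θ w, GreenAux.rotL_single1 θ]
    simp only [Matrix.cons_val_zero, Matrix.cons_val_one, Matrix.head_cons]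
    ring
  have hface1 : ∀ c : ℝ, faceFun (pullback E (fun x => P x • dx2 + Q x • dy2)) 1 c
      = fun t => -(u ((1 : Fin 2).insertNth c t) 1) := by
    intro c
    funext t
    simp only [faceFun, pullback, hE, GreenAux.fderiv_rigidMotion,
      AlternatingMap.compLinearMap_apply, ContinuousLinearMap.coe_coe,
      AlternatingMap.add_apply, AlternatingMap.smul_apply, GreenAux.dx2_apply',
      GreenAux.dy2_apply', smul_eq_mul,
      hsa1, e, hu]
    rw [GreenAux.fderiv_rigidMotion θ w, GreenAux.rotL_single0 θ]
    simp only [Matrix.cons_val_zero, Matrix.cons_val_one, Matrix.head_cons]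
    ring
  -- conversion of 1-dimensional Riemann integrals to Bochner integrals
  have hbox : ∀ (i : Fin 2) (f : (Fin 1 → ℝ) → ℝ),
      ContinuousOn f (Box.Icc (Box.face (⟨a, b, hab⟩ : Box (Fin 2)) i)) →
      riemannIntegral f (a ∘ i.succAbove) (b ∘ i.succAbove)
        = ∫ x in Box.Icc (Box.face (⟨a, b, hab⟩ : Box (Fin 2)) i), f x := by
    intro i f hf
    rw [riemannIntegral,
      dif_pos (show ∀ j : Fin 1, (a ∘ i.succAbove) j < (b ∘ i.succAbove) j from
        fun j => hab (i.succAbove j))]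
    exact GreenAux.riemann_eq_setIntegral hf
  have hcontu : ∀ (i : Fin 2) (c : ℝ), c ∈ Set.Icc (a i) (b i) →
      ContinuousOn (fun t => u (i.insertNth c t) i)
        (Box.Icc (Box.face (⟨a, b, hab⟩ : Box (Fin 2)) i)) := fun i c hc =>
    Box.continuousOn_face_Icc ((continuous_apply i).comp_continuousOn Hc) hc
  have hmem_b : ∀ i : Fin 2, b i ∈ Set.Icc (a i) (b i) := fun i =>
    Set.right_mem_Icc.2 (hab i).le
  have hmem_a : ∀ i : Fin 2, a i ∈ Set.Icc (a i) (b i) := fun i =>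
    Set.left_mem_Icc.2 (hab i).le
  -- put everything together
  rw [boundaryIntegral, Fin.sum_univ_two]
  rw [hface0 (b 0), hface0 (a 0), hface1 (b 1), hface1 (a 1)]
  rw [hbox 0 _ (hcontu 0 (b 0) (hmem_b 0)), hbox 0 _ (hcontu 0 (a 0) (hmem_a 0)),
    hbox 1 (fun t => -(u ((1 : Fin 2).insertNth (b 1) t) 1)) ((hcontu 1 (b 1) (hmem_b 1)).neg),
    hbox 1 (fun t => -(u ((1 : Fin 2).insertNth (a 1) t) 1)) ((hcontu 1 (a 1) (hmem_a 1)).neg)]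
  rw [MeasureTheory.integral_neg, MeasureTheory.integral_neg]
  have hRHS : riemannIntegral g a b
      = BoxIntegral.integral (⟨a, b, hab⟩ : Box (Fin 2)) BoxIntegral.IntegrationParams.Riemann g
          BoxIntegral.BoxAdditiveMap.volume := by
    rw [riemannIntegral, dif_pos hab]
  rw [hRHS, hmain2]
  simp only [Fin.val_zero, Fin.val_one, pow_zero, pow_one]
  ring

end
end
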